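/- arXiv:1706.09740 — 4 statements merged into one kernel-verified Lean document; each statement's English description precedes it below -/
import Mathlib

section
/- For every integer $l\ge 1$, the function $(x_0,\dots,x_n)\mapsto\Psi_{2l-1}(x_0,\dots,x_n,a)$, defined for pairwise distinct $x_0,\dots,x_n\in(-a,a)$, admits a continuous extension to all of $(-a,a)^{n+1}$, i.e. there is a continuous function $\Psi^*_{2l-1}(\cdot,\dots,\cdot,a)$ on $(-a,a)^{n+1}$ agreeing with $\Psi_{2l-1}(\cdot,\dots,\cdot,a)$ at every tuple of pairwise distinct points; the same holds with $a$ replaced by $-a$. -/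
open Real Set Finset

/-- The `m`-th Bernoulli polynomial evaluated at a real number. -/
noncomputable def bern (m : ℕ) (x : ℝ) : ℝ :=
  Polynomial.eval x (Polynomial.map (algebraMap ℚ ℝ) (Polynomial.bernoulli m))

/-- The coefficients `μ_k`. -/
noncomputable def mu (a : ℝ) {n : ℕ} (xs : Fin (n + 1) → ℝ) (k : Fin (n + 1)) : ℝ :=
  (∏ j ∈ Finset.univ.erase k,
    (Real.sin (π * xs k / (2 * a)) - Real.sin (π * xs j / (2 * a))))⁻¹

/-- The function `Ψ_{2l-1}(x_0,…,x_n,x)`. -/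
noncomputable def Psi (a : ℝ) {n : ℕ} (l : ℕ) (xs : Fin (n + 1) → ℝ) (x : ℝ) : ℝ :=
  (4 * a) ^ (2 * l - 1) / (Nat.factorial (2 * l)) *
    ∑ k, mu a xs k *
      (bern (2 * l) (1 / 2 + (x + xs k) / (4 * a)) +
        bern (2 * l) (Int.fract ((x - xs k) / (4 * a))))

namespace PsiExt

/-- scaled sine -/
noncomputable def SC (a : ℝ) (z : ℂ) : ℂ := Complex.sin ((↑(π / (2*a)) : ℂ) * z)

noncomputable def rad (a : ℝ) {n : ℕ} (xs : Fin (n+1) → ℝ) : ℝ := (‖xs‖ + a) / 2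

/-- numerator of the integrand -/
noncomputable def num (a : ℝ) (qc : ℂ → ℂ) (z : ℂ) : ℂ :=
  (↑(π / (2*a)) : ℂ) * Complex.cos ((↑(π / (2*a)) : ℂ) * z) * qc z

/-- `bern` over `ℂ`. -/
noncomputable def bernC (m : ℕ) (z : ℂ) : ℂ :=
  Polynomial.eval z (Polynomial.map (algebraMap ℚ ℂ) (Polynomial.bernoulli m))

/-- the endpoint function, as a circle integral over a circle of radius depending
continuously on `xs` -/
noncomputable def FF (a : ℝ) {n : ℕ} (qc : ℂ → ℂ) (xs : Fin (n+1) → ℝ) : ℝ :=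
  ((2 * ↑π * Complex.I)⁻¹ *
    ∫ θ in (0:ℝ)..(2*π),
      (circleMap 0 (rad a xs) θ * Complex.I) *
        (num a qc (circleMap 0 (rad a xs) θ) /
          ∏ j, (SC a (circleMap 0 (rad a xs) θ) - SC a ((xs j : ℂ))))).re

lemma SC_ne {a : ℝ} (ha : 0 < a) {x : ℝ} (hx : |x| < a) {z : ℂ} (hz : ‖z‖ < a)
    (hne : z ≠ (x : ℂ)) : SC a z ≠ SC a (x : ℂ) := by
  intro h
  have hc : (0:ℝ) < π / (2*a) := div_pos Real.pi_pos (by linarith)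
  have h0 : SC a z - SC a (x:ℂ) = 0 := sub_eq_zero.mpr h
  rw [SC, SC, Complex.sin_sub_sin] at h0
  have hπ : (π:ℂ) ≠ 0 := Complex.ofReal_ne_zero.mpr Real.pi_ne_zero
  have ha' : ((a:ℝ):ℂ) ≠ 0 := Complex.ofReal_ne_zero.mpr ha.ne'
  rcases mul_eq_zero.mp h0 with h1 | h2
  · rcases mul_eq_zero.mp h1 with h3 | h4
    · exact absurd h3 (by norm_num)
    · rw [Complex.sin_eq_zero_iff] at h4
      obtain ⟨k, hk⟩ := h4
      push_cast at hk
      field_simp at hk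
      have hz' : z = ((x + (k:ℝ) * (4*a) : ℝ) : ℂ) := by
        have hmul : (π:ℂ) * z = (π:ℂ) * ((x + (k:ℝ) * (4*a) : ℝ) : ℂ) := by
          push_cast
          linear_combination (π:ℂ) * hk
        exact mul_left_cancel₀ hπ hmul
      by_cases hk0 : k = 0
      · rw [hk0] at hz'; push_cast at hz'; simp at hz'
        exact hne hz'
      · have hk1 : (1:ℝ) ≤ |(k:ℝ)| := by exact_mod_cast Int.one_le_abs hk0
        have hn : ‖z‖ = |x + (k:ℝ) * (4*a)| := by rw [hz', Complex.norm_real, Real.norm_eq_abs]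
        have hb : |(k:ℝ) * (4*a)| ≤ |x + (k:ℝ)*(4*a)| + |x| := by
          calc |(k:ℝ) * (4*a)| = |(x + (k:ℝ)*(4*a)) + (-x)| := by ring_nf
            _ ≤ |x + (k:ℝ)*(4*a)| + |(-x)| := abs_add_le _ _
            _ = |x + (k:ℝ)*(4*a)| + |x| := by rw [abs_neg]
        have h4a : 4*a ≤ |(k:ℝ) * (4*a)| := by
          rw [abs_mul, abs_of_pos (by linarith : (0:ℝ) < 4*a)]
          nlinarith
        rw [hn] at hz
        linarith
  · rw [Complex.cos_eq_zero_iff] at h2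
    obtain ⟨k, hk⟩ := h2
    push_cast at hk
    field_simp at hk
    have hz' : z = (((2*(k:ℝ)+1) * (2*a) - x : ℝ) : ℂ) := by
      have hmul : (π:ℂ) * z = (π:ℂ) * (((2*(k:ℝ)+1) * (2*a) - x : ℝ) : ℂ) := by
        push_cast
        linear_combination (π:ℂ) * hk
      exact mul_left_cancel₀ hπ hmul
    have hk1 : (1:ℝ) ≤ |2*(k:ℝ)+1| := by
      have h1 : (2*k+1 : ℤ) ≠ 0 := by omega
      have h2' : (1:ℝ) ≤ |((2*k+1 : ℤ) : ℝ)| := by exact_mod_cast Int.one_le_abs h1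
      push_cast at h2'
      exact h2'
    have hn : ‖z‖ = |(2*(k:ℝ)+1) * (2*a) - x| := by rw [hz', Complex.norm_real, Real.norm_eq_abs]
    have hb : |(2*(k:ℝ)+1) * (2*a)| ≤ |(2*(k:ℝ)+1) * (2*a) - x| + |x| := by
      calc |(2*(k:ℝ)+1) * (2*a)| = |((2*(k:ℝ)+1) * (2*a) - x) + x| := by ring_nf
        _ ≤ _ + |x| := abs_add_le _ _
    have h2a : 2*a ≤ |(2*(k:ℝ)+1) * (2*a)| := by
      rw [abs_mul, abs_of_pos (by linarith : (0:ℝ) < 2*a)]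
      nlinarith
    rw [hn] at hz
    linarith

lemma partial_fractions {F : Type*} [Field F] {ι : Type*} [Fintype ι] [DecidableEq ι] [Nonempty ι]
    {v : ι → F} (hv : Function.Injective v) {w : F} (hw : ∀ j, w - v j ≠ 0) :
    (∏ j, (w - v j))⁻¹ = ∑ k, (∏ j ∈ Finset.univ.erase k, (v k - v j))⁻¹ * (w - v k)⁻¹ := by
  have hs := Lagrange.sum_basis (s := Finset.univ) (v := v) hv.injOn univ_nonempty
  have h1 : (1:F) = ∑ k, (∏ j ∈ Finset.univ.erase k, (v k - v j))⁻¹ *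
      ∏ j ∈ Finset.univ.erase k, (w - v j) := by
    have h := congrArg (Polynomial.eval w) hs
    simp only [Polynomial.eval_finset_sum, Lagrange.basis, Lagrange.basisDivisor,
      Polynomial.eval_prod, Polynomial.eval_mul, Polynomial.eval_C, Polynomial.eval_sub,
      Polynomial.eval_X, Polynomial.eval_one, Finset.prod_mul_distrib,
      Finset.prod_inv_distrib] at h
    exact h.symm
  have hstep : ∑ k, (∏ j ∈ Finset.univ.erase k, (v k - v j))⁻¹ * (w - v k)⁻¹
      = (∑ k, (∏ j ∈ Finset.univ.erase k, (v k - v j))⁻¹ *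
          ∏ j ∈ Finset.univ.erase k, (w - v j)) * (∏ j, (w - v j))⁻¹ := by
    rw [Finset.sum_mul]
    refine Finset.sum_congr rfl fun k _ => ?_
    have hall : ∏ j, (w - v j) = (w - v k) * ∏ j ∈ Finset.univ.erase k, (w - v j) :=
      (Finset.mul_prod_erase _ _ (Finset.mem_univ k)).symm
    have hE : (∏ j ∈ Finset.univ.erase k, (w - v j)) ≠ 0 :=
      Finset.prod_ne_zero_iff.mpr fun j _ => hw j
    rw [hall, mul_inv, mul_comm ((w - v k)⁻¹), mul_assoc, mul_inv_cancel_left₀ hE]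
  rw [hstep, ← h1, one_mul]

lemma SC_hasDerivAt (a : ℝ) (w : ℂ) :
    HasDerivAt (SC a) (Complex.cos ((↑(π / (2*a)) : ℂ) * w) * (↑(π / (2*a)) : ℂ)) w := by
  have h1 : HasDerivAt (fun z : ℂ => (↑(π / (2*a)) : ℂ) * z) ((↑(π / (2*a)) : ℂ)) w := by
    simpa using (hasDerivAt_id w).const_mul ((↑(π / (2*a)) : ℂ))
  exact (Complex.hasDerivAt_sin ((↑(π / (2*a)) : ℂ) * w)).comp w h1

lemma SC_differentiable (a : ℝ) : Differentiable ℂ (SC a) :=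
  fun w => (SC_hasDerivAt a w).differentiableAt

lemma SC_real (a : ℝ) (y : ℝ) : SC a (y:ℂ) = ((Real.sin (π / (2*a) * y) : ℝ) : ℂ) := by
  rw [SC, ← Complex.ofReal_mul, ← Complex.ofReal_sin]

lemma pole_integral {a : ℝ} (ha : 0 < a) {qc : ℂ → ℂ} (hqc : Differentiable ℂ qc)
    {R : ℝ} (hR0 : 0 < R) (hRa : R < a) {x : ℝ} (hx : |x| < R) :
    (∮ z in C(0, R), num a qc z * (SC a z - SC a (x:ℂ))⁻¹)
      = 2 * ↑π * Complex.I * qc (x:ℂ) := by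
  have hxa : |x| < a := hx.trans hRa
  have hc : (0:ℝ) < π / (2*a) := div_pos Real.pi_pos (by linarith)
  have hcC : ((π / (2*a) : ℝ) : ℂ) ≠ 0 := Complex.ofReal_ne_zero.mpr hc.ne'
  have hcx : |π / (2*a) * x| < π/2 := by
    rw [abs_mul, abs_of_pos hc]
    have : π / (2*a) * a = π / 2 := by field_simp
    nlinarith [abs_nonneg x]
  have hcos : Complex.cos ((↑(π / (2*a)) : ℂ) * (x:ℂ)) ≠ 0 := by
    rw [← Complex.ofReal_mul, ← Complex.ofReal_cos]
    rw [Complex.ofReal_ne_zero]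
    have hio : π / (2*a) * x ∈ Set.Ioo (-(π/2)) (π/2) :=
      ⟨(abs_lt.mp hcx).1, (abs_lt.mp hcx).2⟩
    exact (Real.cos_pos_of_mem_Ioo hio).ne'
  -- differentiability and nonvanishing of the dslope
  have hdsl : Differentiable ℂ (dslope (SC a) (x:ℂ)) := by
    intro z
    rcases eq_or_ne z (x:ℂ) with rfl | hzx
    · obtain ⟨p, hp⟩ := (SC_differentiable a).analyticAt ((x:ℂ))
      exact hp.has_fpower_series_dslope_fslope.analyticAt.differentiableAt
    · exact (differentiableAt_dslope_of_ne hzx).mpr ((SC_differentiable a) z)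
  have hdne : ∀ z ∈ Metric.closedBall (0:ℂ) R, dslope (SC a) (x:ℂ) z ≠ 0 := by
    intro z hz
    rcases eq_or_ne z (x:ℂ) with rfl | hzx
    · rw [dslope_same, (SC_hasDerivAt a (x:ℂ)).deriv]
      exact mul_ne_zero hcos hcC
    · rw [dslope_of_ne _ hzx, slope_def_field]
      have hzn : ‖z‖ < a := lt_of_le_of_lt (mem_closedBall_zero_iff.mp hz) hRa
      exact div_ne_zero (sub_ne_zero.mpr (SC_ne ha hxa hzn hzx)) (sub_ne_zero.mpr hzx)
  have hnumd : Differentiable ℂ (num a qc) := by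
    apply Differentiable.mul
    · apply Differentiable.mul (differentiable_const _)
      exact Complex.differentiable_cos.comp ((differentiable_id.const_mul _))
    · exact hqc
  have hgd : ∀ z ∈ Metric.closedBall (0:ℂ) R,
      DifferentiableAt ℂ (fun z => num a qc z / dslope (SC a) (x:ℂ) z) z :=
    fun z hz => (hnumd z).div (hdsl z) (hdne z hz)
  have heqon : EqOn (fun z => num a qc z * (SC a z - SC a (x:ℂ))⁻¹)
      (fun z => (z - (x:ℂ))⁻¹ • (num a qc z / dslope (SC a) (x:ℂ) z))
      (Metric.sphere (0:ℂ) R) := by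
    intro z hz
    have hzn : ‖z‖ = R := mem_sphere_zero_iff_norm.mp hz
    have hzx : z ≠ (x:ℂ) := by
      intro h
      rw [h, Complex.norm_real, Real.norm_eq_abs] at hzn
      exact hx.ne hzn
    have hSne : SC a z - SC a (x:ℂ) ≠ 0 :=
      sub_ne_zero.mpr (SC_ne ha hxa (hzn ▸ hRa) hzx)
    have hzx' : z - (x:ℂ) ≠ 0 := sub_ne_zero.mpr hzx
    simp only [smul_eq_mul]
    rw [dslope_of_ne _ hzx, slope_def_field]
    field_simp
  rw [circleIntegral.integral_congr hR0.le heqon]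
  have hxball : (x:ℂ) ∈ Metric.ball (0:ℂ) R := by
    rw [mem_ball_zero_iff, Complex.norm_real, Real.norm_eq_abs]; exact hx
  have hcont : ContinuousOn (fun z => num a qc z / dslope (SC a) (x:ℂ) z)
      (Metric.closedBall (0:ℂ) R) :=
    fun z hz => ((hgd z hz).continuousAt).continuousWithinAt
  have hdiff : ∀ z ∈ Metric.ball (0:ℂ) R \ (∅ : Set ℂ),
      DifferentiableAt ℂ (fun z => num a qc z / dslope (SC a) (x:ℂ) z) z :=
    fun z hz => hgd z (Metric.ball_subset_closedBall hz.1)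
  rw [Complex.circleIntegral_sub_inv_smul_of_differentiable_on_off_countable
    countable_empty hxball hcont hdiff]
  rw [smul_eq_mul, dslope_same, (SC_hasDerivAt a (x:ℂ)).deriv, num,
    mul_comm ((↑(π / (2*a)) : ℂ)) (Complex.cos _),
    mul_div_cancel_left₀ _ (mul_ne_zero hcos hcC)]


lemma FF_eq {a : ℝ} (ha : 0 < a) {qc : ℂ → ℂ} {qr : ℝ → ℝ} (hqc : Differentiable ℂ qc)
    (hq : ∀ x : ℝ, qc ↑x = ↑(qr x)) {n : ℕ} (xs : Fin (n+1) → ℝ)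
    (hxs : ∀ i, xs i ∈ Set.Ioo (-a) a) (hinj : Function.Injective xs) :
    FF a qc xs = ∑ k, mu a xs k * qr (xs k) := by
  have hc : (0:ℝ) < π / (2*a) := div_pos Real.pi_pos (by linarith)
  have hxa : ∀ i, |xs i| < a := fun i => abs_lt.mpr ⟨(hxs i).1, (hxs i).2⟩
  have hna : ‖xs‖ < a := (pi_norm_lt_iff ha).mpr fun i => by
    simpa [Real.norm_eq_abs] using hxa i
  set R := rad a xs with hRdef
  have hRa : R < a := by rw [hRdef, rad]; linarith
  have hR0 : 0 < R := by
    rw [hRdef, rad]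
    have := norm_nonneg xs
    linarith
  have hxR : ∀ i, |xs i| < R := by
    intro i
    have h1 : |xs i| ≤ ‖xs‖ := by
      simpa [Real.norm_eq_abs] using norm_le_pi_norm xs i
    rw [hRdef, rad]; linarith
  -- membership of scaled points
  have hmem : ∀ i, π / (2*a) * xs i ∈ Set.Icc (-(π/2)) (π/2) := by
    intro i
    have h1 : |π / (2*a) * xs i| ≤ π/2 := by
      rw [abs_mul, abs_of_pos hc]
      have h2 : π / (2*a) * a = π / 2 := by field_simp
      nlinarith [abs_nonneg (xs i), (hxa i).le]
    exact abs_le.mp h1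
  -- injectivity of the nodes
  have hvinj : Function.Injective (fun j => SC a ((xs j : ℂ))) := by
    intro i j hij
    simp only [SC_real] at hij
    rw [Complex.ofReal_inj] at hij
    exact hinj (mul_left_cancel₀ hc.ne' (Real.injOn_sin (hmem i) (hmem j) hij))
  -- nonvanishing on the sphere
  have hszne : ∀ z ∈ Metric.sphere (0:ℂ) R, ∀ j, SC a z - SC a ((xs j : ℂ)) ≠ 0 := by
    intro z hz j
    have hzn : ‖z‖ = R := mem_sphere_zero_iff_norm.mp hz
    have hzx : z ≠ ((xs j : ℂ)) := by
      intro h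
      rw [h, Complex.norm_real, Real.norm_eq_abs] at hzn
      exact (hxR j).ne hzn
    exact sub_ne_zero.mpr (SC_ne ha (hxa j) (hzn ▸ hRa) hzx)
  -- step 1 : FF as a circle integral
  have hFF : FF a qc xs = ((2 * ↑π * Complex.I)⁻¹ *
      ∮ z in C(0, R), num a qc z / ∏ j, (SC a z - SC a ((xs j : ℂ)))).re := by
    rw [FF, ← hRdef]
    congr 2
    simp only [circleIntegral, deriv_circleMap, smul_eq_mul]
  rw [hFF]
  -- step 2 : partial fractions on the sphere
  have heq1 : Set.EqOn (fun z => num a qc z / ∏ j, (SC a z - SC a ((xs j : ℂ))))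
      (fun z => ∑ k, (∏ j ∈ Finset.univ.erase k,
          (SC a ((xs k : ℂ)) - SC a ((xs j : ℂ))))⁻¹ *
        (num a qc z * (SC a z - SC a ((xs k : ℂ)))⁻¹)) (Metric.sphere (0:ℂ) R) := by
    intro z hz
    simp only
    rw [div_eq_mul_inv, partial_fractions hvinj (hszne z hz), Finset.mul_sum]
    exact Finset.sum_congr rfl fun k _ => by ring
  rw [circleIntegral.integral_congr hR0.le heq1]
  -- step 3 : exchange sum and integral
  have hcontk : ∀ k : Fin (n+1), CircleIntegrable (fun z =>
      (∏ j ∈ Finset.univ.erase k, (SC a ((xs k : ℂ)) - SC a ((xs j : ℂ))))⁻¹ *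
        (num a qc z * (SC a z - SC a ((xs k : ℂ)))⁻¹)) 0 R := by
    intro k
    apply ContinuousOn.circleIntegrable hR0.le
    apply ContinuousOn.mul continuousOn_const
    apply ContinuousOn.mul
    · apply Continuous.continuousOn
      apply Continuous.mul
      · exact continuous_const.mul (Complex.continuous_cos.comp (continuous_const.mul continuous_id))
      · exact hqc.continuous
    · apply ContinuousOn.inv₀
      · exact (((SC_differentiable a).continuous.sub continuous_const)).continuousOn
      · intro z hz; exact hszne z hz k
  have hsum : (∮ z in C(0, R), ∑ k, (∏ j ∈ Finset.univ.erase k,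
        (SC a ((xs k : ℂ)) - SC a ((xs j : ℂ))))⁻¹ *
          (num a qc z * (SC a z - SC a ((xs k : ℂ)))⁻¹))
      = ∑ k, ∮ z in C(0, R), (∏ j ∈ Finset.univ.erase k,
        (SC a ((xs k : ℂ)) - SC a ((xs j : ℂ))))⁻¹ *
          (num a qc z * (SC a z - SC a ((xs k : ℂ)))⁻¹) := by
    simp only [circleIntegral]
    rw [← intervalIntegral.integral_finset_sum]
    · congr 1
      funext θ
      rw [← Finset.smul_sum]
    · intro k _
      exact (hcontk k).out
  rw [hsum]
  -- step 4 : evaluate each term by the Cauchy integral formula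
  have hterm : ∀ k : Fin (n+1), (∮ z in C(0, R), (∏ j ∈ Finset.univ.erase k,
        (SC a ((xs k : ℂ)) - SC a ((xs j : ℂ))))⁻¹ *
          (num a qc z * (SC a z - SC a ((xs k : ℂ)))⁻¹))
      = (∏ j ∈ Finset.univ.erase k, (SC a ((xs k : ℂ)) - SC a ((xs j : ℂ))))⁻¹ *
          (2 * ↑π * Complex.I * qc ((xs k : ℂ))) := by
    intro k
    have hmulout := circleIntegral.integral_smul (𝕜 := ℂ)
      ((∏ j ∈ Finset.univ.erase k, (SC a ((xs k : ℂ)) - SC a ((xs j : ℂ))))⁻¹)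
      (fun z => num a qc z * (SC a z - SC a ((xs k : ℂ)))⁻¹) 0 R
    simp only [smul_eq_mul] at hmulout
    rw [hmulout, pole_integral ha hqc hR0 hRa (hxR k)]
  rw [Finset.sum_congr rfl fun k _ => hterm k]
  -- step 5 : simplify
  have h2πI : (2 * (π:ℂ) * Complex.I) ≠ 0 := by
    simp [Real.pi_ne_zero, Complex.I_ne_zero, Complex.ofReal_ne_zero]
  have hpull : (2 * (π:ℂ) * Complex.I)⁻¹ * ∑ k, (∏ j ∈ Finset.univ.erase k,
        (SC a ((xs k : ℂ)) - SC a ((xs j : ℂ))))⁻¹ * (2 * ↑π * Complex.I * qc ((xs k : ℂ)))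
      = ∑ k, (∏ j ∈ Finset.univ.erase k,
          (SC a ((xs k : ℂ)) - SC a ((xs j : ℂ))))⁻¹ * qc ((xs k : ℂ)) := by
    rw [Finset.mul_sum]
    refine Finset.sum_congr rfl fun k _ => ?_
    field_simp
  rw [hpull]
  -- step 6 : everything is real
  have hprod : ∀ k : Fin (n+1), (∏ j ∈ Finset.univ.erase k,
        (SC a ((xs k : ℂ)) - SC a ((xs j : ℂ))))⁻¹ * qc ((xs k : ℂ))
      = ((mu a xs k * qr (xs k) : ℝ) : ℂ) := by
    intro k
    rw [hq, mu]
    push_cast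
    congr 1
    congr 1
    refine Finset.prod_congr rfl fun j _ => ?_
    rw [SC_real, SC_real]
    have h1 : π / (2*a) * xs k = π * xs k / (2*a) := by ring
    have h2 : π / (2*a) * xs j = π * xs j / (2*a) := by ring
    rw [h1, h2]
    push_cast
    ring
  rw [Finset.sum_congr rfl fun k _ => hprod k]
  rw [← Complex.ofReal_sum]
  exact Complex.ofReal_re _


lemma FF_cont {a : ℝ} (ha : 0 < a) {qc : ℂ → ℂ} (hqc : Continuous qc) {n : ℕ} :
    ContinuousOn (FF a qc) {xs : Fin (n+1) → ℝ | ∀ i, xs i ∈ Set.Ioo (-a) a} := by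
  set S := {xs : Fin (n+1) → ℝ | ∀ i, xs i ∈ Set.Ioo (-a) a} with hS
  rw [continuousOn_iff_continuous_restrict]
  have hres : S.domRestrict (FF a qc) = fun p : ↥S =>
      ((2 * ↑π * Complex.I)⁻¹ *
        ∫ θ in (0:ℝ)..(2*π),
          (circleMap 0 (rad a (p : Fin (n+1) → ℝ)) θ * Complex.I) *
            (num a qc (circleMap 0 (rad a (p : Fin (n+1) → ℝ)) θ) /
              ∏ j, (SC a (circleMap 0 (rad a (p : Fin (n+1) → ℝ)) θ) -
                SC a (((p : Fin (n+1) → ℝ) j : ℂ))))).re := rfl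
  rw [hres]
  apply Complex.continuous_re.comp
  apply Continuous.mul continuous_const
  -- basic continuous maps
  have hval : Continuous fun p : ↥S × ℝ => (p.1 : Fin (n+1) → ℝ) :=
    continuous_subtype_val.comp continuous_fst
  have hrad : Continuous fun p : ↥S × ℝ => rad a (p.1 : Fin (n+1) → ℝ) := by
    have h1 : Continuous fun xs : Fin (n+1) → ℝ => rad a xs := by
      unfold rad
      exact (continuous_norm.add continuous_const).div_const _
    exact h1.comp hval
  have hcm : Continuous fun p : ↥S × ℝ => circleMap 0 (rad a (p.1 : Fin (n+1) → ℝ)) p.2 := by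
    simp only [circleMap]
    apply Continuous.add continuous_const
    apply Continuous.mul
    · exact Complex.continuous_ofReal.comp hrad
    · exact Complex.continuous_exp.comp ((Complex.continuous_ofReal.comp continuous_snd).mul
        continuous_const)
  have hSCc : Continuous (SC a) := (SC_differentiable a).continuous
  -- facts about the radius at points of S
  have hradfacts : ∀ xs : Fin (n+1) → ℝ, xs ∈ S →
      0 < rad a xs ∧ rad a xs < a ∧ ∀ i, |xs i| < rad a xs := by
    intro xs hxs
    have hxa : ∀ i, |xs i| < a := fun i => abs_lt.mpr ⟨(hxs i).1, (hxs i).2⟩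
    have hna : ‖xs‖ < a := (pi_norm_lt_iff ha).mpr fun i => by
      simpa [Real.norm_eq_abs] using hxa i
    have hn0 := norm_nonneg xs
    refine ⟨by rw [rad]; linarith, by rw [rad]; linarith, fun i => ?_⟩
    have h1 : |xs i| ≤ ‖xs‖ := by
      simpa [Real.norm_eq_abs] using norm_le_pi_norm xs i
    rw [rad]; linarith
  -- the denominator never vanishes
  have hden : ∀ p : ↥S × ℝ,
      (∏ j, (SC a (circleMap 0 (rad a (p.1 : Fin (n+1) → ℝ)) p.2) -
        SC a (((p.1 : Fin (n+1) → ℝ) j : ℂ)))) ≠ 0 := by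
    rintro ⟨⟨xs, hxs⟩, θ⟩
    obtain ⟨hr0, hra, hxr⟩ := hradfacts xs hxs
    apply Finset.prod_ne_zero_iff.mpr
    intro j _
    have hzn : ‖circleMap 0 (rad a xs) θ‖ = rad a xs := by
      have := norm_circleMap_zero (rad a xs) θ
      rw [this, abs_of_pos hr0]
    have hzx : circleMap 0 (rad a xs) θ ≠ ((xs j : ℂ)) := by
      intro h
      rw [h, Complex.norm_real, Real.norm_eq_abs] at hzn
      exact (hxr j).ne hzn
    have hxa : |xs j| < a := abs_lt.mpr ⟨(hxs j).1, (hxs j).2⟩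
    exact sub_ne_zero.mpr (SC_ne ha hxa (lt_of_le_of_lt hzn.le hra) hzx)
  -- joint continuity of the integrand
  have huncurry : Continuous (Function.uncurry (fun (p : ↥S) (θ : ℝ) =>
      (circleMap 0 (rad a (p : Fin (n+1) → ℝ)) θ * Complex.I) *
        (num a qc (circleMap 0 (rad a (p : Fin (n+1) → ℝ)) θ) /
          ∏ j, (SC a (circleMap 0 (rad a (p : Fin (n+1) → ℝ)) θ) -
            SC a (((p : Fin (n+1) → ℝ) j : ℂ)))))) := by
    apply Continuous.mul (hcm.mul continuous_const)
    apply Continuous.div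
    · unfold num
      apply Continuous.mul
      · exact continuous_const.mul (Complex.continuous_cos.comp (continuous_const.mul hcm))
      · exact hqc.comp hcm
    · apply continuous_finset_prod
      intro j _
      apply Continuous.sub (hSCc.comp hcm)
      apply hSCc.comp
      exact Complex.continuous_ofReal.comp ((continuous_apply j).comp hval)
    · exact hden
  exact intervalIntegral.continuous_parametric_intervalIntegral_of_continuous'
    huncurry 0 (2*π)


lemma bernC_ofReal (m : ℕ) (y : ℝ) : bernC m (y : ℂ) = ((bern m y : ℝ) : ℂ) := by
  rw [bernC, bern]
  have h : (algebraMap ℚ ℂ) = Complex.ofRealHom.comp (algebraMap ℚ ℝ) := Subsingleton.elim _ _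
  have h2 : ((y:ℝ):ℂ) = Complex.ofRealHom y := rfl
  rw [h, ← Polynomial.map_map, Polynomial.eval_map, h2, Polynomial.eval₂_at_apply]
  rfl

end PsiExt

/-- For every `l ≥ 1`, the functions `(x_0,…,x_n) ↦ Ψ_{2l-1}(x_0,…,x_n,± a)`, defined for
pairwise distinct `x_0,…,x_n ∈ (-a,a)`, admit continuous extensions to `(-a,a)^{n+1}`. -/
theorem psi_continuous_extension_at_endpoints
    (a : ℝ) (ha : 0 < a) (n : ℕ) (l : ℕ) (hl : 1 ≤ l) :
    ∃ F G : (Fin (n + 1) → ℝ) → ℝ,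
      ContinuousOn F {xs | ∀ i, xs i ∈ Set.Ioo (-a) a} ∧
      ContinuousOn G {xs | ∀ i, xs i ∈ Set.Ioo (-a) a} ∧
      ∀ xs : Fin (n + 1) → ℝ, (∀ i, xs i ∈ Set.Ioo (-a) a) → Function.Injective xs →
        F xs = Psi a l xs a ∧ G xs = Psi a l xs (-a) := by
  classical
  set qcF : ℂ → ℂ := fun z => PsiExt.bernC (2*l) (1/2 + ((a:ℂ) + z)/(4*(a:ℂ))) +
    PsiExt.bernC (2*l) (((a:ℂ) - z)/(4*(a:ℂ))) with hqcF
  set qrF : ℝ → ℝ := fun x => bern (2*l) (1/2 + (a + x)/(4*a)) +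
    bern (2*l) ((a - x)/(4*a)) with hqrF
  set qcG : ℂ → ℂ := fun z => PsiExt.bernC (2*l) (1/2 + (-(a:ℂ) + z)/(4*(a:ℂ))) +
    PsiExt.bernC (2*l) ((-(a:ℂ) - z)/(4*(a:ℂ)) + 1) with hqcG
  set qrG : ℝ → ℝ := fun x => bern (2*l) (1/2 + (-a + x)/(4*a)) +
    bern (2*l) ((-a - x)/(4*a) + 1) with hqrG
  have hdF : Differentiable ℂ qcF := by
    apply Differentiable.add
    · exact (Polynomial.differentiable _).comp
        (((differentiable_id.const_add ((a:ℂ))).div_const _).const_add _)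
    · exact (Polynomial.differentiable _).comp
        (((differentiable_const ((a:ℂ))).sub differentiable_id).div_const _)
  have hdG : Differentiable ℂ qcG := by
    apply Differentiable.add
    · exact (Polynomial.differentiable _).comp
        (((differentiable_id.const_add (-(a:ℂ))).div_const _).const_add _)
    · exact (Polynomial.differentiable _).comp
        ((((differentiable_const (-(a:ℂ))).sub differentiable_id).div_const _).add_const _)
  have hqFr : ∀ x : ℝ, qcF ↑x = ↑(qrF x) := by
    intro x
    rw [hqcF, hqrF]
    simp only
    rw [show ((1:ℂ)/2 + ((a:ℂ) + ↑x)/(4*(a:ℂ))) = (((1:ℝ)/2 + (a + x)/(4*a) : ℝ) : ℂ) by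
        push_cast; ring,
      show (((a:ℂ) - ↑x)/(4*(a:ℂ))) = (((a - x)/(4*a) : ℝ) : ℂ) by push_cast; ring,
      PsiExt.bernC_ofReal, PsiExt.bernC_ofReal]
    push_cast
    ring
  have hqGr : ∀ x : ℝ, qcG ↑x = ↑(qrG x) := by
    intro x
    rw [hqcG, hqrG]
    simp only
    rw [show ((1:ℂ)/2 + (-(a:ℂ) + ↑x)/(4*(a:ℂ))) = (((1:ℝ)/2 + (-a + x)/(4*a) : ℝ) : ℂ) by
        push_cast; ring,
      show ((-(a:ℂ) - ↑x)/(4*(a:ℂ)) + 1) = (((-a - x)/(4*a) + 1 : ℝ) : ℂ) by push_cast; ring,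
      PsiExt.bernC_ofReal, PsiExt.bernC_ofReal]
    push_cast
    ring
  refine ⟨fun xs => (4 * a) ^ (2 * l - 1) / (Nat.factorial (2 * l)) * PsiExt.FF a qcF xs,
    fun xs => (4 * a) ^ (2 * l - 1) / (Nat.factorial (2 * l)) * PsiExt.FF a qcG xs,
    continuousOn_const.mul (PsiExt.FF_cont ha hdF.continuous),
    continuousOn_const.mul (PsiExt.FF_cont ha hdG.continuous), ?_⟩
  intro xs hxs hinj
  constructor
  · beta_reduce
    rw [PsiExt.FF_eq ha hdF hqFr xs hxs hinj, Psi]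
    congr 1
    refine Finset.sum_congr rfl fun k _ => ?_
    congr 1
    rw [hqrF]
    simp only
    have hfr : Int.fract ((a - xs k)/(4*a)) = (a - xs k)/(4*a) := by
      apply Int.fract_eq_self.mpr
      constructor
      · apply div_nonneg _ (by linarith)
        have := (hxs k).2
        linarith
      · rw [div_lt_one (by linarith : (0:ℝ) < 4*a)]
        have := (hxs k).1
        linarith
    rw [hfr]
  · beta_reduce
    rw [PsiExt.FF_eq ha hdG hqGr xs hxs hinj, Psi]
    congr 1
    refine Finset.sum_congr rfl fun k _ => ?_
    congr 1
    rw [hqrG]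
    simp only
    have hfl : ⌊(-a - xs k)/(4*a)⌋ = -1 := by
      rw [Int.floor_eq_iff]
      push_cast
      constructor
      · rw [le_div_iff₀ (by linarith : (0:ℝ) < 4*a)]
        have := (hxs k).2
        linarith
      · have h1 : -a - xs k < 0 := by have := (hxs k).1; linarith
        have h2 : (-a - xs k)/(4*a) < 0 := div_neg_of_neg_of_pos h1 (by linarith)
        linarith
    have hfr : Int.fract ((-a - xs k)/(4*a)) = (-a - xs k)/(4*a) + 1 := by
      rw [← Int.self_sub_floor, hfl]
      push_cast
      ring
    rw [hfr]
end

section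
/- If $2l\ge n+2$, the function $\Psi_{2l-1}$, defined for pairwise distinct $x_0,\dots,x_n\in(-a,a)$ and $x\in[-a,a]$, admits a continuous extension to $(-a,a)^{n+1}\times[-a,a]$, i.e. there is a continuous function $\Psi^*_{2l-1}$ on $(-a,a)^{n+1}\times[-a,a]$ agreeing with $\Psi_{2l-1}$ at every point whose first $n+1$ coordinates are pairwise distinct. -/
set_option maxHeartbeats 1000000

open Real Set Finset

noncomputable def dd : (n : ℕ) → (ℝ → ℝ) → (Fin (n + 1) → ℝ) → ℝ
  | 0, f, t => f (t 0)
  | n + 1, f, t => ∫ s in (0:ℝ)..1,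
      dd n (fun u => deriv f (t 0 + s * (u - t 0))) (t ∘ Fin.succ)

lemma aff_mem {c d t0 v s : ℝ} (ht0 : t0 ∈ Ioo c d) (hv : v ∈ Ioo c d)
    (hs : s ∈ Icc (0:ℝ) 1) : t0 + s * (v - t0) ∈ Ioo c d := by
  obtain ⟨h1, h2⟩ := ht0
  obtain ⟨h3, h4⟩ := hv
  obtain ⟨h5, h6⟩ := hs
  rcases le_total t0 v with h | h
  · have l1 : t0 ≤ t0 + s * (v - t0) := by nlinarith
    have l2 : t0 + s * (v - t0) ≤ v := by nlinarith
    exact ⟨lt_of_lt_of_le h1 l1, lt_of_le_of_lt l2 h4⟩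
  · have l1 : v ≤ t0 + s * (v - t0) := by nlinarith
    have l2 : t0 + s * (v - t0) ≤ t0 := by nlinarith
    exact ⟨lt_of_lt_of_le h3 l1, lt_of_le_of_lt l2 h2⟩

lemma dd_congr {c d : ℝ} : ∀ (n : ℕ) (f g : ℝ → ℝ), (∀ v ∈ Ioo c d, f v = g v) →
    ∀ t : Fin (n + 1) → ℝ, (∀ i, t i ∈ Ioo c d) → dd n f t = dd n g t := by
  intro n
  induction n with
  | zero => intro f g hfg t ht; exact hfg _ (ht 0)
  | succ n ih =>
    intro f g hfg t ht
    show (∫ s in (0:ℝ)..1, _) = ∫ s in (0:ℝ)..1, _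
    refine intervalIntegral.integral_congr fun s hs => ?_
    rw [Set.uIcc_of_le (by norm_num : (0:ℝ) ≤ 1)] at hs
    refine ih _ _ (fun v hv => ?_) _ (fun i => ht i.succ)
    have hmem : t 0 + s * (v - t 0) ∈ Ioo c d := aff_mem (ht 0) hv hs
    have : f =ᶠ[nhds (t 0 + s * (v - t 0))] g :=
      Filter.eventuallyEq_of_mem (isOpen_Ioo.mem_nhds hmem) hfg
    exact this.deriv_eq

section MuSum
open Polynomial

lemma sum_inv_prod_sub_eq_zero {m : ℕ} (y : Fin (m + 2) → ℝ) (hy : Function.Injective y) :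
    ∑ k, (∏ j ∈ Finset.univ.erase k, (y k - y j))⁻¹ = 0 := by
  have hinj : Set.InjOn y ↑(univ : Finset (Fin (m + 2))) := fun a _ b _ h => hy h
  have hsum := Lagrange.sum_basis hinj ⟨0, mem_univ 0⟩
  have hcard : (univ : Finset (Fin (m + 2))).card = m + 2 := by simp
  have hcoeff := congrArg (fun p : ℝ[X] => p.coeff (m + 1)) hsum
  simp only [finset_sum_coeff] at hcoeff
  have hbasis : ∀ k : Fin (m + 2),
      (Lagrange.basis univ y k).coeff (m + 1) = ∏ j ∈ univ.erase k, (y k - y j)⁻¹ := by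
    intro k
    have hdeg : (Lagrange.basis univ y k).natDegree = m + 1 := by
      rw [Lagrange.natDegree_basis hinj (mem_univ k), hcard]
      omega
    rw [← hdeg, Polynomial.coeff_natDegree, Lagrange.basis, leadingCoeff_prod]
    refine Finset.prod_congr rfl fun j hj => ?_
    have hne : y k ≠ y j := fun h => (Finset.mem_erase.1 hj).1 (hy h).symm
    rw [Lagrange.basisDivisor, leadingCoeff_mul, leadingCoeff_C, leadingCoeff_X_sub_C, mul_one]
  rw [Finset.sum_congr rfl (fun k _ => hbasis k)] at hcoeff
  have h1 : ((1 : ℝ[X])).coeff (m + 1) = 0 := by rw [Polynomial.coeff_one]; simp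
  rw [h1] at hcoeff
  rw [← hcoeff]
  exact Finset.sum_congr rfl fun k _ => (Finset.prod_inv_distrib _).symm

end MuSum

lemma dd_eq {c d : ℝ} : ∀ (n : ℕ) (f : ℝ → ℝ), ContDiffOn ℝ n f (Ioo c d) →
    ∀ t : Fin (n + 1) → ℝ, (∀ i, t i ∈ Ioo c d) → Function.Injective t →
    dd n f t = ∑ k, (∏ j ∈ Finset.univ.erase k, (t k - t j))⁻¹ * f (t k) := by
  intro n
  induction n with
  | zero =>
    intro f _ t _ _
    simp [dd]
  | succ n ih =>
    intro f hf t ht hinj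
    have hopen : IsOpen (Ioo c d) := isOpen_Ioo
    have hderiv : ContDiffOn ℝ n (deriv f) (Ioo c d) :=
      hf.deriv_of_isOpen hopen (by exact_mod_cast le_refl (n + 1))
    have hdcont : ContinuousOn (deriv f) (Ioo c d) := hderiv.continuousOn
    have hdiff : ∀ v ∈ Ioo c d, HasDerivAt f (deriv f v) v := by
      intro v hv
      have h1 : DifferentiableOn ℝ f (Ioo c d) :=
        hf.differentiableOn (by simp)
      exact ((h1 v hv).differentiableAt (hopen.mem_nhds hv)).hasDerivAt
    have tail_mem : ∀ i : Fin (n + 1), (t ∘ Fin.succ) i ∈ Ioo c d := fun i => ht _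
    have tail_inj : Function.Injective (t ∘ Fin.succ) :=
      hinj.comp (Fin.succ_injective _)
    have huIcc : Set.uIcc (0:ℝ) 1 = Set.Icc 0 1 := Set.uIcc_of_le (by norm_num)
    -- step 1 : rewrite the integrand via the induction hypothesis
    have step1 : Set.EqOn
        (fun s => dd n (fun u => deriv f (t 0 + s * (u - t 0))) (t ∘ Fin.succ))
        (fun s => ∑ k : Fin (n + 1), (∏ j ∈ Finset.univ.erase k, (t k.succ - t j.succ))⁻¹ *
            deriv f (t 0 + s * (t k.succ - t 0)))
        (Set.uIcc (0:ℝ) 1) := by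
      intro s hs
      rw [huIcc] at hs
      have haff : ContDiff ℝ (n : ℕ∞) (fun u : ℝ => t 0 + s * (u - t 0)) := by
        apply contDiff_const.add
        exact contDiff_const.mul (contDiff_id.sub contDiff_const)
      have hg : ContDiffOn ℝ n (fun u => deriv f (t 0 + s * (u - t 0))) (Ioo c d) := by
        exact ContDiffOn.comp hderiv (haff.contDiffOn) (fun u hu => aff_mem (ht 0) hu hs)
      have := ih _ hg (t ∘ Fin.succ) tail_mem tail_inj
      simpa [Function.comp] using this
    show (∫ s in (0:ℝ)..1, dd n (fun u => deriv f (t 0 + s * (u - t 0))) (t ∘ Fin.succ)) = _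
    rw [intervalIntegral.integral_congr step1]
    -- step 2 : integrate term by term
    have hcontk : ∀ k : Fin (n + 1), ContinuousOn
        (fun s : ℝ => deriv f (t 0 + s * (t k.succ - t 0))) (Set.uIcc (0:ℝ) 1) := by
      intro k
      refine hdcont.comp (Continuous.continuousOn (by continuity)) ?_
      intro s hs
      rw [huIcc] at hs
      exact aff_mem (ht 0) (ht k.succ) hs
    have hint : ∀ k ∈ (Finset.univ : Finset (Fin (n + 1))), IntervalIntegrable
        (fun s => (∏ j ∈ Finset.univ.erase k, (t k.succ - t j.succ))⁻¹ *
          deriv f (t 0 + s * (t k.succ - t 0))) MeasureTheory.volume 0 1 := by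
      intro k _
      exact (continuousOn_const.mul (hcontk k)).intervalIntegrable
    rw [intervalIntegral.integral_finset_sum hint]
    -- step 3 : fundamental theorem of calculus for each term
    have key : ∀ k : Fin (n + 1),
        (∫ s in (0:ℝ)..1, (∏ j ∈ Finset.univ.erase k, (t k.succ - t j.succ))⁻¹ *
          deriv f (t 0 + s * (t k.succ - t 0)))
        = (∏ j ∈ Finset.univ.erase k, (t k.succ - t j.succ))⁻¹ *
          ((f (t k.succ) - f (t 0)) * (t k.succ - t 0)⁻¹) := by
      intro k
      rw [intervalIntegral.integral_const_mul]
      congr 1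
      have hne : t k.succ - t 0 ≠ 0 :=
        sub_ne_zero.2 fun h => (Fin.succ_ne_zero k) (hinj h)
      have hFTC : (∫ s in (0:ℝ)..1,
          deriv f (t 0 + s * (t k.succ - t 0)) * (t k.succ - t 0))
          = (fun s : ℝ => f (t 0 + s * (t k.succ - t 0))) 1
            - (fun s : ℝ => f (t 0 + s * (t k.succ - t 0))) 0 := by
        refine intervalIntegral.integral_eq_sub_of_hasDerivAt
          (f := fun s : ℝ => f (t 0 + s * (t k.succ - t 0)))
          (f' := fun s : ℝ => deriv f (t 0 + s * (t k.succ - t 0)) * (t k.succ - t 0)) ?_ ?_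
        · intro s hs
          rw [huIcc] at hs
          have hmem := aff_mem (ht 0) (ht k.succ) hs
          have h1 : HasDerivAt (fun s : ℝ => t 0 + s * (t k.succ - t 0))
              (t k.succ - t 0) s := by
            simpa using ((hasDerivAt_id s).mul_const (t k.succ - t 0)).const_add (t 0)
          have := (hdiff _ hmem).comp s h1
          simpa [Function.comp_def] using this
        · exact ((hcontk k).mul continuousOn_const).intervalIntegrable
      simp only at hFTC
      rw [intervalIntegral.integral_mul_const] at hFTC
      have heval : f (t 0 + 1 * (t k.succ - t 0)) - f (t 0 + 0 * (t k.succ - t 0))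
          = f (t k.succ) - f (t 0) := by norm_num
      rw [heval] at hFTC
      field_simp at hFTC ⊢
      rw [← hFTC]
      congr 1
      exact intervalIntegral.integral_congr fun x _ => by ring_nf
    rw [Finset.sum_congr rfl (fun k _ => key k)]
    -- step 4 : algebraic identification
    have fact1 : ∀ k : Fin (n + 1),
        (∏ j ∈ Finset.univ.erase (Fin.succ k), (t k.succ - t j))⁻¹
        = (∏ j ∈ Finset.univ.erase k, (t k.succ - t j.succ))⁻¹ * (t k.succ - t 0)⁻¹ := by
      intro k
      have hp : (∏ j ∈ Finset.univ.erase (Fin.succ k), (t k.succ - t j))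
          = (t k.succ - t 0) * ∏ j ∈ Finset.univ.erase k, (t k.succ - t j.succ) := by
        rw [Fin.univ_succ, Finset.cons_eq_insert,
          Finset.erase_insert_of_ne (Fin.succ_ne_zero k).symm]
        have hme : (Finset.univ.map ⟨Fin.succ, Fin.succ_injective _⟩).erase k.succ
            = ((Finset.univ.erase k).map ⟨Fin.succ, Fin.succ_injective _⟩) :=
          (Finset.map_erase _ _ _).symm
        rw [hme, Finset.prod_insert, Finset.prod_map]
        · rfl
        · intro hmem
          rcases Finset.mem_map.1 hmem with ⟨j, _, hj⟩
          exact (Fin.succ_ne_zero j) hj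
      rw [hp, mul_inv, mul_comm]
    have hmu := sum_inv_prod_sub_eq_zero t hinj
    rw [Fin.sum_univ_succ] at hmu
    rw [Finset.sum_congr rfl (fun k (_ : k ∈ Finset.univ) => fact1 k)] at hmu
    have hrhs : (∑ k : Fin (n + 2), (∏ j ∈ Finset.univ.erase k, (t k - t j))⁻¹ * f (t k))
        = (∏ j ∈ Finset.univ.erase (0 : Fin (n + 2)), (t 0 - t j))⁻¹ * f (t 0)
          + ∑ k : Fin (n + 1), ((∏ j ∈ Finset.univ.erase k, (t k.succ - t j.succ))⁻¹
            * (t k.succ - t 0)⁻¹) * f (t k.succ) := by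
      rw [Fin.sum_univ_succ]
      congr 1
      exact Finset.sum_congr rfl fun k _ => by rw [fact1 k]
    rw [hrhs]
    have hsum : (∑ k : Fin (n + 1), (∏ j ∈ Finset.univ.erase k, (t k.succ - t j.succ))⁻¹
          * ((f (t k.succ) - f (t 0)) * (t k.succ - t 0)⁻¹))
        = (∑ k : Fin (n + 1), ((∏ j ∈ Finset.univ.erase k, (t k.succ - t j.succ))⁻¹
            * (t k.succ - t 0)⁻¹) * f (t k.succ))
          - (∑ k : Fin (n + 1), (∏ j ∈ Finset.univ.erase k, (t k.succ - t j.succ))⁻¹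
            * (t k.succ - t 0)⁻¹) * f (t 0) := by
      rw [Finset.sum_mul, ← Finset.sum_sub_distrib]
      exact Finset.sum_congr rfl fun k _ => by ring
    rw [hsum]
    have hmu0 : (∏ j ∈ Finset.univ.erase (0 : Fin (n + 2)), (t 0 - t j))⁻¹
        = -∑ k : Fin (n + 1), (∏ j ∈ Finset.univ.erase k, (t k.succ - t j.succ))⁻¹
          * (t k.succ - t 0)⁻¹ := by linarith
    rw [hmu0]
    ring

universe u

lemma dd_contOn {c d : ℝ} :
    ∀ (n : ℕ), ∀ {X : Type u} [TopologicalSpace X], ∀ (P : Set X) (Dh : ℕ → X → ℝ → ℝ),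
    (∀ k < n, ∀ p ∈ P, ∀ v ∈ Ioo c d, HasDerivAt (Dh k p) (Dh (k + 1) p v) v) →
    (∀ k ≤ n, ContinuousOn (fun q : X × ℝ => Dh k q.1 q.2) (P ×ˢ Ioo c d)) →
    ContinuousOn (fun q : X × (Fin (n + 1) → ℝ) => dd n (Dh 0 q.1) q.2)
      (P ×ˢ {t : Fin (n + 1) → ℝ | ∀ i, t i ∈ Ioo c d}) := by
  intro n
  induction n with
  | zero =>
    intro X instX P Dh _ hcont
    have h0 := hcont 0 le_rfl
    have hmap : Continuous (fun q : X × (Fin 1 → ℝ) => (q.1, q.2 0)) :=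
      continuous_fst.prodMk ((continuous_apply 0).comp continuous_snd)
    have : ContinuousOn ((fun q : X × ℝ => Dh 0 q.1 q.2) ∘
        (fun q : X × (Fin 1 → ℝ) => (q.1, q.2 0)))
        (P ×ˢ {t : Fin 1 → ℝ | ∀ i, t i ∈ Ioo c d}) := by
      refine h0.comp hmap.continuousOn ?_
      rintro ⟨p, t⟩ ⟨hp, ht⟩
      exact ⟨hp, ht 0⟩
    simpa [dd, Function.comp_def] using this
  | succ n ih =>
    intro X instX P Dh hderiv hcont
    set σfn : ℝ → ℝ := fun s => max 0 (min 1 s) with hσfn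
    have hσc : Continuous σfn := continuous_const.max (continuous_const.min continuous_id)
    have hσmem : ∀ s : ℝ, σfn s ∈ Icc (0:ℝ) 1 :=
      fun s => ⟨le_max_left _ _, max_le (by norm_num) (min_le_left _ _)⟩
    have hσeq : ∀ s ∈ Icc (0:ℝ) 1, σfn s = s := by
      intro s hs
      simp only [hσfn]
      rw [min_eq_right hs.2, max_eq_right hs.1]
    set Dh' : ℕ → (X × ℝ × ℝ) → ℝ → ℝ :=
      fun k q u => q.2.1 ^ k * Dh (k + 1) q.1 (q.2.2 + q.2.1 * (u - q.2.2)) with hDh'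
    set P' : Set (X × ℝ × ℝ) := P ×ˢ (Icc (0:ℝ) 1) ×ˢ (Ioo c d) with hP'
    have hderiv' : ∀ k < n, ∀ p ∈ P', ∀ v ∈ Ioo c d,
        HasDerivAt (Dh' k p) (Dh' (k + 1) p v) v := by
      rintro k hk ⟨p, s, t0⟩ ⟨hp, hs, ht0⟩ v hv
      have hmem : t0 + s * (v - t0) ∈ Ioo c d := aff_mem ht0 hv hs
      have h1 : HasDerivAt (fun u : ℝ => t0 + s * (u - t0)) s v := by
        simpa using (((hasDerivAt_id v).sub_const t0).const_mul s).const_add t0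
      have h2 := (hderiv (k + 1) (by omega) p hp _ hmem).comp v h1
      have h2' : HasDerivAt (fun u : ℝ => Dh (k + 1) p (t0 + s * (u - t0)))
          (Dh (k + 1 + 1) p (t0 + s * (v - t0)) * s) v := by
        simpa [Function.comp_def] using h2
      have h3 := h2'.const_mul (s ^ k)
      simp only [hDh']
      convert h3 using 1
      · rfl
      · rfl
      ring
    have hcont' : ∀ k ≤ n, ContinuousOn
        (fun q : (X × ℝ × ℝ) × ℝ => Dh' k q.1 q.2) (P' ×ˢ Ioo c d) := by
      intro k hk
      simp only [hDh']
      have hm : Continuous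
          (fun q : (X × ℝ × ℝ) × ℝ => (q.1.1, q.1.2.2 + q.1.2.1 * (q.2 - q.1.2.2))) := by
        fun_prop
      have hmt : MapsTo (fun q : (X × ℝ × ℝ) × ℝ => (q.1.1, q.1.2.2 + q.1.2.1 * (q.2 - q.1.2.2)))
          (P' ×ˢ Ioo c d) (P ×ˢ Ioo c d) := by
        rintro ⟨⟨p, s, t0⟩, v⟩ ⟨⟨hp, hs, ht0⟩, hv⟩
        exact ⟨hp, aff_mem ht0 hv hs⟩
      have hpow : Continuous (fun q : (X × ℝ × ℝ) × ℝ => q.1.2.1 ^ k) := by fun_prop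
      exact hpow.continuousOn.mul ((hcont (k + 1) (by omega)).comp hm.continuousOn hmt)
    have IH := ih (X := X × ℝ × ℝ) P' Dh' hderiv' hcont'
    rw [continuousOn_iff_continuous_restrict]
    set S : Set (X × (Fin (n + 1 + 1) → ℝ)) :=
      P ×ˢ {t : Fin (n + 1 + 1) → ℝ | ∀ i, t i ∈ Ioo c d} with hS
    set g : ↥S → ℝ → ℝ := fun y s =>
      dd n (Dh' 0 (y.val.1, σfn s, y.val.2 0)) (y.val.2 ∘ Fin.succ) with hg
    have hgc : Continuous (Function.uncurry g) := by
      have hmc : Continuous (fun q : ↥S × ℝ =>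
          (((q.1.val.1, σfn q.2, q.1.val.2 0) : X × ℝ × ℝ),
            (q.1.val.2 ∘ Fin.succ : Fin (n + 1) → ℝ))) := by
        have hv : Continuous (fun q : ↥S × ℝ => q.1.val) :=
          continuous_subtype_val.comp continuous_fst
        refine Continuous.prodMk ?_ ?_
        · exact (hv.fst).prodMk ((hσc.comp continuous_snd).prodMk
            ((continuous_apply 0).comp hv.snd))
        · exact continuous_pi fun i => (continuous_apply i.succ).comp hv.snd
      refine IH.comp_continuous hmc ?_
      rintro ⟨y, s⟩
      refine ⟨⟨y.prop.1, hσmem s, y.prop.2 0⟩, ?_⟩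
      exact fun i => y.prop.2 i.succ
    have key : ∀ y : ↥S,
        (S.restrict (fun q : X × (Fin (n + 1 + 1) → ℝ) => dd (n + 1) (Dh 0 q.1) q.2)) y
        = ∫ s in (0:ℝ)..1, g y s := by
      intro y
      show dd (n + 1) (Dh 0 y.val.1) y.val.2 = _
      show (∫ s in (0:ℝ)..1, dd n
        (fun u => deriv (Dh 0 y.val.1) (y.val.2 0 + s * (u - y.val.2 0)))
        (y.val.2 ∘ Fin.succ)) = _
      refine intervalIntegral.integral_congr fun s hs => ?_
      rw [Set.uIcc_of_le (by norm_num : (0:ℝ) ≤ 1)] at hs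
      have hσs : σfn s = s := hσeq s hs
      simp only [hg, hσs]
      refine dd_congr n _ _ ?_ _ (fun i => y.prop.2 i.succ)
      intro v hv
      have hmem : y.val.2 0 + s * (v - y.val.2 0) ∈ Ioo c d :=
        aff_mem (y.prop.2 0) hv hs
      have hd := (hderiv 0 (Nat.succ_pos n) y.val.1 y.prop.1 _ hmem).deriv
      simp only [hDh', pow_zero, one_mul]
      exact hd
    have hfinal : Continuous (fun y : ↥S => ∫ s in (0:ℝ)..1, g y s) :=
      intervalIntegral.continuous_parametric_intervalIntegral_of_continuous' hgc 0 1
    have : S.restrict (fun q : X × (Fin (n + 1 + 1) → ℝ) => dd (n + 1) (Dh 0 q.1) q.2)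
        = fun y => ∫ s in (0:ℝ)..1, g y s := funext key
    change Continuous (S.restrict (fun q : X × (Fin (n + 1 + 1) → ℝ) => dd (n + 1) (Dh 0 q.1) q.2))
    rw [this]
    exact hfinal

lemma bern_contDiff (m : ℕ) {n : ℕ} : ContDiff ℝ n (bern m) := by
  have h : AnalyticOnNhd ℝ (bern m) Set.univ := by
    have h0 : AnalyticOnNhd ℝ (fun x : ℝ => (Polynomial.aeval x) (Polynomial.bernoulli m))
        Set.univ := (analyticOnNhd_id (𝕜 := ℝ) (E := ℝ)).aeval_polynomial _
    have : bern m = fun x : ℝ => (Polynomial.aeval x) (Polynomial.bernoulli m) := by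
      funext y
      rw [bern, Polynomial.eval_map, Polynomial.aeval_def]
    rw [this]
    exact h0
  exact contDiff_iff_contDiffAt.2 fun x => (h x (mem_univ x)).contDiffAt

lemma minpow_hasDerivAt (m : ℕ) (y : ℝ) :
    HasDerivAt (fun y : ℝ => (min y 0) ^ (m + 2)) ((m + 2) * (min y 0) ^ (m + 1)) y := by
  rcases lt_trichotomy y 0 with h | h | h
  · have hev : (fun y : ℝ => (min y 0) ^ (m + 2)) =ᶠ[nhds y] (fun y : ℝ => y ^ (m + 2)) := by
      filter_upwards [Iio_mem_nhds h] with z hz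
      rw [min_eq_left (le_of_lt hz)]
    have := hasDerivAt_pow (m + 2) y
    have h2 : HasDerivAt (fun y : ℝ => (min y 0) ^ (m + 2)) (↑(m + 2) * y ^ (m + 2 - 1)) y :=
      this.congr_of_eventuallyEq hev
    have : min y 0 = y := min_eq_left h.le
    convert h2 using 1
    rw [this]
    push_cast
    ring_nf
  · subst h
    rw [hasDerivAt_iff_isLittleO, Asymptotics.isLittleO_iff]
    intro ε hε
    filter_upwards [Metric.ball_mem_nhds (0:ℝ) (by positivity : (0:ℝ) < min ε 1)] with z hz
    rw [Metric.mem_ball, Real.dist_eq, sub_zero] at hz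
    have h1 : |z| < ε := lt_of_lt_of_le hz (min_le_left _ _)
    have h2 : |z| < 1 := lt_of_lt_of_le hz (min_le_right _ _)
    have h3 : |min z 0| ≤ |z| := by
      rcases le_total z 0 with hz' | hz'
      · rw [min_eq_left hz']
      · rw [min_eq_right hz']; simp
    simp only [min_self, zero_pow (by omega : m + 2 ≠ 0), zero_pow (by omega : m + 1 ≠ 0),
      sub_zero, mul_zero, smul_eq_mul, Real.norm_eq_abs]
    calc |(min z 0) ^ (m + 2)| = |min z 0| ^ (m + 2) := abs_pow _ _
      _ ≤ |z| ^ (m + 2) := pow_le_pow_left₀ (abs_nonneg _) h3 _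
      _ ≤ |z| ^ 2 := pow_le_pow_of_le_one (abs_nonneg _) h2.le (by omega)
      _ = |z| * |z| := by rw [pow_two]
      _ ≤ ε * |z| := mul_le_mul_of_nonneg_right h1.le (abs_nonneg _)
  · have hev : (fun y : ℝ => (min y 0) ^ (m + 2)) =ᶠ[nhds y] (fun _ : ℝ => (0:ℝ)) := by
      filter_upwards [Ioi_mem_nhds h] with z hz
      rw [min_eq_right (le_of_lt hz)]
      exact zero_pow (by omega)
    have h2 : HasDerivAt (fun y : ℝ => (min y 0) ^ (m + 2)) 0 y :=
      (hasDerivAt_const y 0).congr_of_eventuallyEq hev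
    convert h2 using 1
    rw [min_eq_right h.le, zero_pow (by omega : m + 1 ≠ 0), mul_zero]

lemma contDiff_min_pow : ∀ m : ℕ, ContDiff ℝ m (fun y : ℝ => (min y 0) ^ (m + 1)) := by
  intro m
  induction m with
  | zero =>
    rw [show ((0:ℕ) : WithTop ℕ∞) = 0 from rfl, contDiff_zero]
    exact (continuous_id.min continuous_const).pow 1
  | succ m ih =>
    rw [show ((m + 1 : ℕ) : WithTop ℕ∞) = (m : WithTop ℕ∞) + 1 by push_cast; ring,
      contDiff_succ_iff_deriv]
    refine ⟨fun y => (minpow_hasDerivAt m y).differentiableAt, ?_, ?_⟩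
    · intro h
      exact absurd h (by simp)
    · have hdeq : deriv (fun y : ℝ => (min y 0) ^ (m + 2))
          = fun y : ℝ => ((m : ℝ) + 2) * (min y 0) ^ (m + 1) :=
        funext fun y => (minpow_hasDerivAt m y).deriv
      rw [hdeq]
      exact contDiff_const.mul ih

lemma bern_add_one (m : ℕ) (y : ℝ) : bern m (1 + y) = bern m y + m * y ^ (m - 1) := by
  have hpoly : (Polynomial.bernoulli m).comp (Polynomial.C 1 + Polynomial.X)
      = Polynomial.bernoulli m + Polynomial.C (m : ℚ) * Polynomial.X ^ (m - 1) := by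
    apply Polynomial.funext
    intro r
    simp [Polynomial.eval_comp, Polynomial.bernoulli_eval_one_add]
  have hmap := congrArg (fun p => Polynomial.eval y (Polynomial.map (algebraMap ℚ ℝ) p)) hpoly
  simp only [Polynomial.map_comp, Polynomial.eval_comp, Polynomial.map_add, Polynomial.map_mul,
    Polynomial.map_pow, Polynomial.map_C, Polynomial.map_X, Polynomial.eval_add,
    Polynomial.eval_mul, Polynomial.eval_pow, Polynomial.eval_C, Polynomial.eval_X,
    Polynomial.map_one, Polynomial.eval_one] at hmap
  simpa [bern, map_natCast] using hmap

lemma bern_fract_eq {l : ℕ} (hl : 1 ≤ l) {y : ℝ} (hy1 : -(1/2 : ℝ) < y) (hy2 : y < 1/2) :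
    bern (2 * l) (Int.fract y) = bern (2 * l) y + (2 * l) * (min y 0) ^ (2 * l - 1) := by
  rcases le_or_gt 0 y with h | h
  · rw [Int.fract_eq_self.2 ⟨h, by linarith⟩, min_eq_right h,
      zero_pow (by omega : 2 * l - 1 ≠ 0), mul_zero, add_zero]
  · have hfl : ⌊y⌋ = -1 := by
      apply Int.floor_eq_iff.2
      constructor <;> push_cast <;> linarith
    have : Int.fract y = 1 + y := by
      rw [Int.fract, hfl]; push_cast; ring
    rw [this, bern_add_one, min_eq_left h.le]
    push_cast
    ring

noncomputable def bigF (a : ℝ) (l : ℕ) (x t : ℝ) : ℝ :=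
  bern (2 * l) (1 / 2 + (x + 2 * a / π * Real.arcsin t) / (4 * a)) +
  bern (2 * l) ((x - 2 * a / π * Real.arcsin t) / (4 * a)) +
  (2 * l) * (min ((x - 2 * a / π * Real.arcsin t) / (4 * a)) 0) ^ (2 * l - 1)

lemma bigF_contDiffOn (a : ℝ) (l m : ℕ) (hm : m ≤ 2 * l - 2) (hl : 1 ≤ l) :
    ContDiffOn ℝ m (Function.uncurry (bigF a l)) ((univ : Set ℝ) ×ˢ Ioo (-1:ℝ) 1) := by
  have harc : ContDiffOn ℝ m (fun q : ℝ × ℝ => Real.arcsin q.2)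
      ((univ : Set ℝ) ×ˢ Ioo (-1:ℝ) 1) := by
    intro p hp
    have h2 : p.2 ∈ Ioo (-1:ℝ) 1 := hp.2
    exact ((Real.contDiffAt_arcsin (ne_of_gt h2.1) (ne_of_lt h2.2)).comp p
      contDiff_snd.contDiffAt).contDiffWithinAt
  have hu1 : ContDiffOn ℝ m
      (fun q : ℝ × ℝ => 1 / 2 + (q.1 + 2 * a / π * Real.arcsin q.2) / (4 * a))
      ((univ : Set ℝ) ×ˢ Ioo (-1:ℝ) 1) :=
    contDiffOn_const.add (((contDiff_fst.contDiffOn).add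
      (contDiffOn_const.mul harc)).div_const (4 * a))
  have hu2 : ContDiffOn ℝ m
      (fun q : ℝ × ℝ => (q.1 - 2 * a / π * Real.arcsin q.2) / (4 * a))
      ((univ : Set ℝ) ×ˢ Ioo (-1:ℝ) 1) :=
    ((contDiff_fst.contDiffOn).sub (contDiffOn_const.mul harc)).div_const (4 * a)
  refine ContDiffOn.add (ContDiffOn.add ?_ ?_) ?_
  · exact (bern_contDiff (2 * l)).comp_contDiffOn hu1
  · exact (bern_contDiff (2 * l)).comp_contDiffOn hu2
  · refine contDiffOn_const.mul ?_
    have hmp : ContDiff ℝ (2 * l - 2 : ℕ) (fun y : ℝ => (min y 0) ^ (2 * l - 1)) := by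
      rw [show 2 * l - 1 = (2 * l - 2) + 1 by omega]
      exact contDiff_min_pow (2 * l - 2)
    exact (hmp.of_le (by exact_mod_cast hm)).comp_contDiffOn hu2

noncomputable def DhF (a : ℝ) (l : ℕ) : ℕ → ℝ → ℝ → ℝ
  | 0, x, t => bigF a l x t
  | k + 1, x, t => fderiv ℝ (Function.uncurry (DhF a l k)) (x, t) (0, 1)

lemma DhF_contDiffOn (a : ℝ) (l : ℕ) (hl : 1 ≤ l) :
    ∀ k m : ℕ, k + m ≤ 2 * l - 2 →
    ContDiffOn ℝ m (Function.uncurry (DhF a l k)) ((univ : Set ℝ) ×ˢ Ioo (-1:ℝ) 1) := by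
  intro k
  induction k with
  | zero =>
    intro m hm
    exact (bigF_contDiffOn a l m (by omega) hl).congr fun p _ => rfl
  | succ k ih =>
    intro m hm
    have h1 : ContDiffOn ℝ (m + 1) (Function.uncurry (DhF a l k))
        ((univ : Set ℝ) ×ˢ Ioo (-1:ℝ) 1) := ih (m + 1) (by omega)
    have h2 : ContDiffOn ℝ m (fun p => fderiv ℝ (Function.uncurry (DhF a l k)) p)
        ((univ : Set ℝ) ×ˢ Ioo (-1:ℝ) 1) :=
      h1.fderiv_of_isOpen (isOpen_univ.prod isOpen_Ioo) (by exact_mod_cast le_refl (m + 1))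
    have h3 := h2.clm_apply (contDiffOn_const (c := ((0:ℝ), (1:ℝ))))
    exact h3.congr fun p _ => rfl

/-- If `2l ≥ n+2`, the function `Ψ_{2l-1}` admits a continuous extension to
`(-a,a)^{n+1} × [-a,a]`. -/
theorem psi_continuous_extension
    (a : ℝ) (ha : 0 < a) (n l : ℕ) (hl : n + 2 ≤ 2 * l) :
    ∃ F : ((Fin (n + 1) → ℝ) × ℝ) → ℝ,
      ContinuousOn F {p | (∀ i, p.1 i ∈ Set.Ioo (-a) a) ∧ p.2 ∈ Set.Icc (-a) a} ∧
      ∀ (xs : Fin (n + 1) → ℝ) (x : ℝ), (∀ i, xs i ∈ Set.Ioo (-a) a) → x ∈ Set.Icc (-a) a →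
        Function.Injective xs → F (xs, x) = Psi a l xs x := by
  have hl2 : 1 ≤ l := by omega
  have hπ := Real.pi_pos
  have ha2 : (0 : ℝ) < 2 * a := by linarith
  have hang : ∀ z ∈ Ioo (-a) a, -(π / 2) < π * z / (2 * a) ∧ π * z / (2 * a) < π / 2 := by
    intro z hz
    constructor
    · rw [lt_div_iff₀ ha2]
      nlinarith [mul_lt_mul_of_pos_left hz.1 hπ]
    · rw [div_lt_iff₀ ha2]
      nlinarith [mul_lt_mul_of_pos_left hz.2 hπ]
  have hsin : ∀ z ∈ Ioo (-a) a, Real.sin (π * z / (2 * a)) ∈ Ioo (-1 : ℝ) 1 := by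
    intro z hz
    obtain ⟨h1, h2⟩ := hang z hz
    constructor
    · have := Real.strictMonoOn_sin (⟨le_refl _, by linarith⟩ :
        -(π/2) ∈ Icc (-(π/2)) (π/2)) ⟨h1.le, h2.le⟩ h1
      rwa [Real.sin_neg, Real.sin_pi_div_two] at this
    · have := Real.strictMonoOn_sin ⟨h1.le, h2.le⟩
        (⟨by linarith, le_refl _⟩ : π/2 ∈ Icc (-(π/2)) (π/2)) h2
      rwa [Real.sin_pi_div_two] at this
  -- the derivative family hypotheses
  have hderiv : ∀ k < n, ∀ p ∈ (univ : Set ℝ), ∀ v ∈ Ioo (-1:ℝ) 1,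
      HasDerivAt (DhF a l k p) (DhF a l (k + 1) p v) v := by
    intro k hk x _ v hv
    have hsm := DhF_contDiffOn a l hl2 k 1 (by omega)
    have hmem : ((x, v) : ℝ × ℝ) ∈ (univ : Set ℝ) ×ˢ Ioo (-1:ℝ) 1 := ⟨mem_univ x, hv⟩
    have hdA : DifferentiableAt ℝ (Function.uncurry (DhF a l k)) (x, v) :=
      (hsm.differentiableOn (by simp) (x, v) hmem).differentiableAt
        ((isOpen_univ.prod isOpen_Ioo).mem_nhds hmem)
    have hincl : HasDerivAt (fun t : ℝ => ((x, t) : ℝ × ℝ)) ((0:ℝ), (1:ℝ)) v :=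
      (hasDerivAt_const v x).prodMk (hasDerivAt_id v)
    exact hdA.hasFDerivAt.comp_hasDerivAt v hincl
  have hcont : ∀ k ≤ n, ContinuousOn (fun q : ℝ × ℝ => DhF a l k q.1 q.2)
      ((univ : Set ℝ) ×ˢ Ioo (-1:ℝ) 1) :=
    fun k hk => (DhF_contDiffOn a l hl2 k 0 (by omega)).continuousOn
  have hdd := dd_contOn n (univ : Set ℝ) (DhF a l) hderiv hcont
  refine ⟨fun p => (4 * a) ^ (2 * l - 1) / (Nat.factorial (2 * l)) *
    dd n (DhF a l 0 p.2) (fun i => Real.sin (π * p.1 i / (2 * a))), ?_, ?_⟩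
  · refine continuousOn_const.mul ?_
    have hmap : Continuous (fun p : (Fin (n + 1) → ℝ) × ℝ =>
        ((p.2, fun i => Real.sin (π * p.1 i / (2 * a))) : ℝ × (Fin (n + 1) → ℝ))) := by
      refine continuous_snd.prodMk (continuous_pi fun i => ?_)
      exact Real.continuous_sin.comp
        ((continuous_const.mul ((continuous_apply i).comp continuous_fst)).div_const _)
    have hmaps : MapsTo (fun p : (Fin (n + 1) → ℝ) × ℝ =>
        ((p.2, fun i => Real.sin (π * p.1 i / (2 * a))) : ℝ × (Fin (n + 1) → ℝ)))
        {p : (Fin (n + 1) → ℝ) × ℝ | (∀ i, p.1 i ∈ Set.Ioo (-a) a) ∧ p.2 ∈ Set.Icc (-a) a}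
        ((univ : Set ℝ) ×ˢ {t : Fin (n + 1) → ℝ | ∀ i, t i ∈ Ioo (-1:ℝ) 1}) := by
      rintro ⟨xs, x⟩ ⟨hxs, _⟩
      exact ⟨mem_univ _, fun i => hsin _ (hxs i)⟩
    exact hdd.comp hmap.continuousOn hmaps
  · intro xs x hxs hx hinj
    have htmem : ∀ i, Real.sin (π * xs i / (2 * a)) ∈ Ioo (-1:ℝ) 1 :=
      fun i => hsin _ (hxs i)
    have htinj : Function.Injective (fun i => Real.sin (π * xs i / (2 * a))) := by
      intro i j hij
      have hi := hang _ (hxs i)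
      have hj := hang _ (hxs j)
      have heq := Real.injOn_sin ⟨hi.1.le, hi.2.le⟩ ⟨hj.1.le, hj.2.le⟩ hij
      have hxeq : xs i = xs j := by
        have hπne : (π : ℝ) ≠ 0 := ne_of_gt hπ
        have hane : (2 * a : ℝ) ≠ 0 := ne_of_gt ha2
        field_simp at heq
        exact heq
      exact hinj hxeq
    have hCD : ContDiffOn ℝ n (DhF a l 0 x) (Ioo (-1:ℝ) 1) := by
      have hj := DhF_contDiffOn a l hl2 0 n (by omega)
      have hline : ContDiff ℝ (n : ℕ∞) (fun v : ℝ => ((x, v) : ℝ × ℝ)) :=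
        contDiff_const.prodMk contDiff_id
      exact (hj.comp hline.contDiffOn (fun v hv => ⟨mem_univ x, hv⟩)).congr fun v _ => rfl
    have hddeq := dd_eq n (DhF a l 0 x) hCD
      (fun i => Real.sin (π * xs i / (2 * a))) htmem htinj
    show (4 * a) ^ (2 * l - 1) / (Nat.factorial (2 * l)) *
      dd n (DhF a l 0 x) (fun i => Real.sin (π * xs i / (2 * a))) = Psi a l xs x
    rw [hddeq]
    show _ = (4 * a) ^ (2 * l - 1) / (Nat.factorial (2 * l)) * ∑ k, mu a xs k *
      (bern (2 * l) (1 / 2 + (x + xs k) / (4 * a)) +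
        bern (2 * l) (Int.fract ((x - xs k) / (4 * a))))
    congr 1
    refine Finset.sum_congr rfl fun k _ => ?_
    have hk := hang _ (hxs k)
    have harck : 2 * a / π * Real.arcsin (Real.sin (π * xs k / (2 * a))) = xs k := by
      rw [Real.arcsin_sin hk.1.le hk.2.le]
      field_simp
    have h4a : (0:ℝ) < 4 * a := by linarith
    have hy1 : -(1/2 : ℝ) < (x - xs k) / (4 * a) := by
      rw [lt_div_iff₀ h4a]
      have := hx.1
      have := (hxs k).2
      nlinarith
    have hy2 : (x - xs k) / (4 * a) < 1/2 := by
      rw [div_lt_iff₀ h4a]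
      have := hx.2
      have := (hxs k).1
      nlinarith
    have hfr := bern_fract_eq hl2 hy1 hy2
    have hDf : DhF a l 0 x (Real.sin (π * xs k / (2 * a)))
        = bern (2 * l) (1 / 2 + (x + xs k) / (4 * a))
          + bern (2 * l) (Int.fract ((x - xs k) / (4 * a))) := by
      show bigF a l x (Real.sin (π * xs k / (2 * a))) = _
      rw [bigF, harck, hfr]
      ring
    rw [hDf, mu]
end

section
/- For every $\varepsilon>0$ there exists $N$ such that for every integer $n\ge N$ and every integer $l\ge n\frac{\log n}{\log\log n}$ one has $c_{2l-1,n}\le e^{\varepsilon n}$; in other words, $c_{2l-1,n}=e^{o(n)}$ as $n\to\infty$, uniformly in $l\ge n\frac{\log n}{\log\log n}$. -/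
open Real Set Finset

lemma pow_self_le_factorial_mul_exp (k : ℕ) :
    (k : ℝ) ^ k ≤ (Nat.factorial k : ℝ) * Real.exp 1 ^ k := by
  induction k with
  | zero => simp
  | succ k ih =>
    have hstep : ((k : ℝ) + 1) ^ k ≤ (k : ℝ) ^ k * Real.exp 1 := by
      rcases Nat.eq_zero_or_pos k with rfl | hk
      · simp
      · have hk0 : (0 : ℝ) < k := by exact_mod_cast hk
        have h1 : (1 : ℝ) + 1 / k ≤ Real.exp (1 / k) := by
          have := Real.add_one_le_exp (1 / (k : ℝ)); linarith
        have h2 : ((1 : ℝ) + 1 / k) ^ k ≤ Real.exp (1 / k) ^ k :=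
          pow_le_pow_left₀ (by positivity) h1 k
        have h3 : Real.exp (1 / (k : ℝ)) ^ k = Real.exp 1 := by
          rw [← Real.exp_nat_mul]; congr 1; field_simp
        have h4 : ((k : ℝ) + 1) ^ k = (k : ℝ) ^ k * ((1 : ℝ) + 1 / k) ^ k := by
          rw [← mul_pow]; congr 1; field_simp
        rw [h4]
        rw [h3] at h2
        exact mul_le_mul_of_nonneg_left h2 (by positivity)
    have hrw : ((k : ℝ) + 1) ^ (k + 1) = ((k : ℝ) + 1) * ((k : ℝ) + 1) ^ k := by ring
    push_cast
    rw [hrw]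
    calc ((k : ℝ) + 1) * ((k : ℝ) + 1) ^ k
        ≤ ((k : ℝ) + 1) * ((k : ℝ) ^ k * Real.exp 1) :=
          mul_le_mul_of_nonneg_left hstep (by positivity)
      _ ≤ ((k : ℝ) + 1) * ((Nat.factorial k : ℝ) * Real.exp 1 ^ k * Real.exp 1) := by
          have h5 : (k : ℝ) ^ k * Real.exp 1 ≤ (Nat.factorial k : ℝ) * Real.exp 1 ^ k * Real.exp 1 :=
            mul_le_mul_of_nonneg_right ih (Real.exp_pos 1).le
          exact mul_le_mul_of_nonneg_left h5 (by positivity)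
      _ = ((k : ℝ) + 1) * (Nat.factorial k : ℝ) * Real.exp 1 ^ (k + 1) := by ring
      _ = ((Nat.factorial (k + 1) : ℝ)) * Real.exp 1 ^ (k + 1) := by
          rw [Nat.factorial_succ]; push_cast; ring

lemma key_A {A B : ℝ} (hA : 0 < A) (s : ℝ) (hs : 0 < s) :
    s * Real.log (A / s) - B * s ≤ A * Real.exp (-(1 + B)) := by
  set x := A * Real.exp (-(1 + B)) / s with hx
  have hxpos : 0 < x := by positivity
  have hlog : Real.log x ≤ x - 1 := Real.log_le_sub_one_of_pos hxpos
  have hlogx : Real.log x = Real.log (A / s) - (1 + B) := by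
    rw [hx, show A * Real.exp (-(1 + B)) / s = A / s * Real.exp (-(1 + B)) by ring,
      Real.log_mul (by positivity) (Real.exp_ne_zero _), Real.log_exp]
    ring
  have hsx : s * x = A * Real.exp (-(1 + B)) := by
    rw [hx]; field_simp
  have h3 : s * Real.log x ≤ s * (x - 1) := mul_le_mul_of_nonneg_left hlog hs.le
  nlinarith [hlogx, hsx]

lemma caseA_bound (n s l : ℕ) (hn : 1 ≤ n) (hs1 : 1 ≤ s) (hsn : s ≤ n) (hl1 : 1 ≤ l) :
    ((n : ℝ) / ((n : ℝ) + (s : ℝ))) ^ (2 * l - 1) * (Nat.choose (2 * n + s - 1) s : ℝ)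
      ≤ Real.exp (3 * (n : ℝ) * Real.exp (-((l : ℝ) / (2 * (n : ℝ))))) := by
  have hr : (0 : ℝ) < n := by exact_mod_cast hn
  have hsr : (0 : ℝ) < s := by exact_mod_cast hs1
  have hsn' : (s : ℝ) ≤ n := by exact_mod_cast hsn
  have hrs : (0 : ℝ) < (n : ℝ) + s := by linarith
  have hfrac0 : (0 : ℝ) < (n : ℝ) / ((n : ℝ) + s) := by positivity
  have hfrac1 : (n : ℝ) / ((n : ℝ) + s) ≤ 1 := by
    rw [div_le_one hrs]; linarith
  -- choose bound
  have hC : (Nat.choose (2 * n + s - 1) s : ℝ)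
      ≤ (3 * (n : ℝ)) ^ s / (Nat.factorial s : ℝ) := by
    calc (Nat.choose (2 * n + s - 1) s : ℝ)
        ≤ ((2 * n + s - 1 : ℕ) : ℝ) ^ s / (Nat.factorial s : ℝ) := by
          exact_mod_cast Nat.choose_le_pow_div s (2 * n + s - 1) (α := ℝ)
      _ ≤ (3 * (n : ℝ)) ^ s / (Nat.factorial s : ℝ) := by
          gcongr
          · have h : (2 * n + s - 1 : ℕ) ≤ 3 * n := by omega
            calc ((2 * n + s - 1 : ℕ) : ℝ) ≤ ((3 * n : ℕ) : ℝ) := by exact_mod_cast h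
              _ = 3 * (n : ℝ) := by push_cast; ring
  have hC2 : (3 * (n : ℝ)) ^ s / (Nat.factorial s : ℝ)
      ≤ (3 * Real.exp 1 * (n : ℝ) / (s : ℝ)) ^ s := by
    have hx : (3 * Real.exp 1 * (n : ℝ) / (s : ℝ)) ^ s
        = (3 * (n : ℝ)) ^ s * Real.exp 1 ^ s / (s : ℝ) ^ s := by
      rw [div_pow, mul_pow, mul_pow]; ring
    rw [hx, div_le_div_iff₀ (by positivity) (by positivity)]
    calc (3 * (n : ℝ)) ^ s * (s : ℝ) ^ s
        ≤ (3 * (n : ℝ)) ^ s * ((Nat.factorial s : ℝ) * Real.exp 1 ^ s) := by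
          gcongr
          exact pow_self_le_factorial_mul_exp s
      _ = (3 * (n : ℝ)) ^ s * Real.exp 1 ^ s * (Nat.factorial s : ℝ) := by ring
  -- power bound
  have hpow : ((n : ℝ) / ((n : ℝ) + s)) ^ (2 * l - 1)
      ≤ Real.exp (-((l : ℝ) / (2 * (n : ℝ)) * s)) := by
    have h1 : ((n : ℝ) / ((n : ℝ) + s)) ^ (2 * l - 1) ≤ ((n : ℝ) / ((n : ℝ) + s)) ^ l :=
      pow_le_pow_of_le_one hfrac0.le hfrac1 (by omega)
    have hlog : Real.log ((n : ℝ) / ((n : ℝ) + s)) ≤ -((s : ℝ) / (2 * (n : ℝ))) := by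
      have h3 := Real.log_le_sub_one_of_pos hfrac0
      have h4 : (n : ℝ) / ((n : ℝ) + s) - 1 = -((s : ℝ) / ((n : ℝ) + s)) := by
        field_simp
        ring
      have h5 : (s : ℝ) / (2 * (n : ℝ)) ≤ (s : ℝ) / ((n : ℝ) + s) := by
        rw [div_le_div_iff₀ (by positivity) hrs]
        nlinarith
      linarith
    have h2 : ((n : ℝ) / ((n : ℝ) + s)) ^ l
        = Real.exp ((l : ℝ) * Real.log ((n : ℝ) / ((n : ℝ) + s))) := by
      rw [Real.exp_nat_mul, Real.exp_log hfrac0]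
    calc ((n : ℝ) / ((n : ℝ) + s)) ^ (2 * l - 1)
        ≤ ((n : ℝ) / ((n : ℝ) + s)) ^ l := h1
      _ = Real.exp ((l : ℝ) * Real.log ((n : ℝ) / ((n : ℝ) + s))) := h2
      _ ≤ Real.exp (-((l : ℝ) / (2 * (n : ℝ)) * s)) := by
          rw [Real.exp_le_exp]
          calc (l : ℝ) * Real.log ((n : ℝ) / ((n : ℝ) + s))
              ≤ (l : ℝ) * (-((s : ℝ) / (2 * (n : ℝ)))) :=
                mul_le_mul_of_nonneg_left hlog (by positivity)
            _ = -((l : ℝ) / (2 * (n : ℝ)) * s) := by ring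
  -- combine
  have hXpos : (0 : ℝ) < 3 * Real.exp 1 * (n : ℝ) / (s : ℝ) := by positivity
  have hmain : ((n : ℝ) / ((n : ℝ) + s)) ^ (2 * l - 1) * (Nat.choose (2 * n + s - 1) s : ℝ)
      ≤ Real.exp (-((l : ℝ) / (2 * (n : ℝ)) * s)) * (3 * Real.exp 1 * (n : ℝ) / (s : ℝ)) ^ s := by
    exact mul_le_mul hpow (hC.trans hC2) (by positivity) (Real.exp_pos _).le
  have hrw : (3 * Real.exp 1 * (n : ℝ) / (s : ℝ)) ^ s
      = Real.exp ((s : ℝ) * Real.log (3 * Real.exp 1 * (n : ℝ) / (s : ℝ))) := by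
    rw [Real.exp_nat_mul, Real.exp_log hXpos]
  rw [hrw, ← Real.exp_add] at hmain
  refine hmain.trans ?_
  rw [Real.exp_le_exp]
  have hkey := key_A (A := 3 * Real.exp 1 * (n : ℝ)) (B := (l : ℝ) / (2 * (n : ℝ)))
    (by positivity) (s : ℝ) hsr
  have he : Real.exp 1 * Real.exp (-1) = 1 := by
    rw [← Real.exp_add]; norm_num
  have hval : 3 * Real.exp 1 * (n : ℝ) * Real.exp (-(1 + (l : ℝ) / (2 * (n : ℝ))))
      = 3 * (n : ℝ) * Real.exp (-((l : ℝ) / (2 * (n : ℝ)))) := by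
    rw [show -(1 + (l : ℝ) / (2 * (n : ℝ))) = (-1) + -((l : ℝ) / (2 * (n : ℝ))) by ring,
      Real.exp_add]
    linear_combination (3 * (n : ℝ) * Real.exp (-((l : ℝ) / (2 * (n : ℝ))))) * he
  calc -((l : ℝ) / (2 * (n : ℝ)) * s) + (s : ℝ) * Real.log (3 * Real.exp 1 * (n : ℝ) / (s : ℝ))
      = (s : ℝ) * Real.log (3 * Real.exp 1 * (n : ℝ) / (s : ℝ))
        - ((l : ℝ) / (2 * (n : ℝ))) * s := by ring
    _ ≤ 3 * Real.exp 1 * (n : ℝ) * Real.exp (-(1 + (l : ℝ) / (2 * (n : ℝ)))) := hkey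
    _ = 3 * (n : ℝ) * Real.exp (-((l : ℝ) / (2 * (n : ℝ)))) := hval

lemma caseB_bound (n s l : ℕ) (hn : 3 ≤ n) (hsn : n ≤ s) (hl : 10 * n ≤ l) :
    ((n : ℝ) / ((n : ℝ) + (s : ℝ))) ^ (2 * l - 1) * (Nat.choose (2 * n + s - 1) s : ℝ)
      ≤ ((n : ℝ) / ((n : ℝ) + (s : ℝ))) ^ 2 := by
  have hn1 : 1 ≤ n := by omega
  have hr : (0 : ℝ) < n := by exact_mod_cast hn1
  have hsr : (n : ℝ) ≤ s := by exact_mod_cast hsn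
  have hrs : (0 : ℝ) < (n : ℝ) + s := by linarith
  set u : ℝ := ((n : ℝ) + s) / n with hu
  have hupos : (0 : ℝ) < u := by positivity
  have hu2 : (2 : ℝ) ≤ u := by
    rw [hu, le_div_iff₀ hr]; linarith
  have hfu : (n : ℝ) / ((n : ℝ) + s) = u⁻¹ := by
    rw [hu, inv_div]
  -- choose bound
  have hsym : Nat.choose (2 * n + s - 1) s = Nat.choose (2 * n + s - 1) (2 * n - 1) := by
    have h1 : s ≤ 2 * n + s - 1 := by omega
    have h2 : 2 * n + s - 1 - s = 2 * n - 1 := by omega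
    rw [← Nat.choose_symm h1, h2]
  have hm1 : 1 ≤ 2 * n - 1 := by omega
  have hmr : (n : ℝ) ≤ ((2 * n - 1 : ℕ) : ℝ) := by
    have : n ≤ 2 * n - 1 := by omega
    exact_mod_cast this
  have hmpos : (0 : ℝ) < ((2 * n - 1 : ℕ) : ℝ) := lt_of_lt_of_le hr hmr
  have hM : ((2 * n + s - 1 : ℕ) : ℝ) ≤ 2 * ((n : ℝ) + s) := by
    have h : (2 * n + s - 1 : ℕ) ≤ 2 * (n + s) := by omega
    calc ((2 * n + s - 1 : ℕ) : ℝ) ≤ ((2 * (n + s) : ℕ) : ℝ) := by exact_mod_cast h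
      _ = 2 * ((n : ℝ) + s) := by push_cast; ring
  have hCb : (Nat.choose (2 * n + s - 1) s : ℝ) ≤ (2 * Real.exp 1 * u) ^ (2 * n) := by
    rw [hsym]
    have hc1 : (Nat.choose (2 * n + s - 1) (2 * n - 1) : ℝ)
        ≤ ((2 * n + s - 1 : ℕ) : ℝ) ^ (2 * n - 1) / (Nat.factorial (2 * n - 1) : ℝ) := by
      exact_mod_cast Nat.choose_le_pow_div (2 * n - 1) (2 * n + s - 1) (α := ℝ)
    have hc2 : ((2 * n + s - 1 : ℕ) : ℝ) ^ (2 * n - 1) / (Nat.factorial (2 * n - 1) : ℝ)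
        ≤ (((2 * n + s - 1 : ℕ) : ℝ) * Real.exp 1 / ((2 * n - 1 : ℕ) : ℝ)) ^ (2 * n - 1) := by
      have hx : (((2 * n + s - 1 : ℕ) : ℝ) * Real.exp 1 / ((2 * n - 1 : ℕ) : ℝ)) ^ (2 * n - 1)
          = ((2 * n + s - 1 : ℕ) : ℝ) ^ (2 * n - 1) * Real.exp 1 ^ (2 * n - 1)
            / ((2 * n - 1 : ℕ) : ℝ) ^ (2 * n - 1) := by
        rw [div_pow, mul_pow]
      rw [hx, div_le_div_iff₀ (by positivity) (by positivity)]
      calc ((2 * n + s - 1 : ℕ) : ℝ) ^ (2 * n - 1) * ((2 * n - 1 : ℕ) : ℝ) ^ (2 * n - 1)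
          ≤ ((2 * n + s - 1 : ℕ) : ℝ) ^ (2 * n - 1)
            * ((Nat.factorial (2 * n - 1) : ℝ) * Real.exp 1 ^ (2 * n - 1)) := by
            gcongr
            exact pow_self_le_factorial_mul_exp (2 * n - 1)
        _ = ((2 * n + s - 1 : ℕ) : ℝ) ^ (2 * n - 1) * Real.exp 1 ^ (2 * n - 1)
            * (Nat.factorial (2 * n - 1) : ℝ) := by ring
    have hbase : ((2 * n + s - 1 : ℕ) : ℝ) * Real.exp 1 / ((2 * n - 1 : ℕ) : ℝ)
        ≤ 2 * Real.exp 1 * u := by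
      have h2ru : 2 * ((n : ℝ) + s) = 2 * (n : ℝ) * u := by
        rw [hu]; field_simp
      calc ((2 * n + s - 1 : ℕ) : ℝ) * Real.exp 1 / ((2 * n - 1 : ℕ) : ℝ)
          ≤ 2 * ((n : ℝ) + s) * Real.exp 1 / (n : ℝ) := by
            apply div_le_div₀ (by positivity) _ hr hmr
            exact mul_le_mul_of_nonneg_right hM (Real.exp_pos 1).le
        _ = 2 * Real.exp 1 * u := by rw [h2ru]; field_simp
    have hone : (1 : ℝ) ≤ 2 * Real.exp 1 * u := by
      nlinarith [Real.exp_one_gt_d9, hu2]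
    calc (Nat.choose (2 * n + s - 1) (2 * n - 1) : ℝ)
        ≤ (((2 * n + s - 1 : ℕ) : ℝ) * Real.exp 1 / ((2 * n - 1 : ℕ) : ℝ)) ^ (2 * n - 1) :=
          hc1.trans hc2
      _ ≤ (2 * Real.exp 1 * u) ^ (2 * n - 1) := by
          gcongr
      _ ≤ (2 * Real.exp 1 * u) ^ (2 * n) := pow_le_pow_right₀ hone (by omega)
  -- main estimate
  set k : ℕ := 2 * l - 2 * n - 3 with hk
  have h2l1 : 2 * l - 1 = 2 * n + 2 + k := by omega
  have hkey : (2 * Real.exp 1) ^ (2 * n) ≤ u ^ k := by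
    have he3 : Real.exp 1 ≤ 3 := by nlinarith [Real.exp_one_lt_d9]
    have h36 : (2 * Real.exp 1) ^ (2 * n) ≤ (36 : ℝ) ^ n := by
      have : (2 * Real.exp 1) ^ (2 * n) = ((2 * Real.exp 1) ^ 2) ^ n := by
        rw [← pow_mul]
      rw [this]
      apply pow_le_pow_left₀ (by positivity)
      nlinarith [he3, Real.exp_pos 1]
    have h217 : (36 : ℝ) ^ n ≤ 2 ^ (17 * n) := by
      have : (2 : ℝ) ^ (17 * n) = ((2 : ℝ) ^ 17) ^ n := by rw [← pow_mul]
      rw [this]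
      apply pow_le_pow_left₀ (by norm_num)
      norm_num
    have hkn : 17 * n ≤ k := by omega
    have h2k : (2 : ℝ) ^ (17 * n) ≤ 2 ^ k := pow_le_pow_right₀ (by norm_num) hkn
    have huk : (2 : ℝ) ^ k ≤ u ^ k := pow_le_pow_left₀ (by norm_num) hu2 k
    linarith
  have hfinal : u⁻¹ ^ (2 * l - 1) * (2 * Real.exp 1 * u) ^ (2 * n) ≤ u⁻¹ ^ 2 := by
    have huinv : u * u⁻¹ = 1 := mul_inv_cancel₀ hupos.ne'
    have hstep : u⁻¹ ^ (2 * l - 1) * (2 * Real.exp 1 * u) ^ (2 * n)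
        = (2 * Real.exp 1) ^ (2 * n) * u⁻¹ ^ k * u⁻¹ ^ 2 := by
      rw [h2l1, mul_pow]
      have h' : u⁻¹ ^ (2 * n) * u ^ (2 * n) = 1 := by
        rw [← mul_pow, inv_mul_cancel₀ hupos.ne', one_pow]
      linear_combination ((2 * Real.exp 1) ^ (2 * n) * u⁻¹ ^ k * u⁻¹ ^ 2) * h'
    rw [hstep]
    have hle1 : (2 * Real.exp 1) ^ (2 * n) * u⁻¹ ^ k ≤ 1 := by
      have h1 : (2 * Real.exp 1) ^ (2 * n) * u⁻¹ ^ k ≤ u ^ k * u⁻¹ ^ k :=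
        mul_le_mul_of_nonneg_right hkey (by positivity)
      have h2 : u ^ k * u⁻¹ ^ k = 1 := by rw [← mul_pow, huinv, one_pow]
      linarith
    calc (2 * Real.exp 1) ^ (2 * n) * u⁻¹ ^ k * u⁻¹ ^ 2 ≤ 1 * u⁻¹ ^ 2 :=
        mul_le_mul_of_nonneg_right hle1 (by positivity)
      _ = u⁻¹ ^ 2 := one_mul _
  calc ((n : ℝ) / ((n : ℝ) + s)) ^ (2 * l - 1) * (Nat.choose (2 * n + s - 1) s : ℝ)
      ≤ ((n : ℝ) / ((n : ℝ) + s)) ^ (2 * l - 1) * (2 * Real.exp 1 * u) ^ (2 * n) := by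
        apply mul_le_mul_of_nonneg_left hCb (by positivity)
    _ = u⁻¹ ^ (2 * l - 1) * (2 * Real.exp 1 * u) ^ (2 * n) := by rw [hfu]
    _ ≤ u⁻¹ ^ 2 := hfinal
    _ = ((n : ℝ) / ((n : ℝ) + s)) ^ 2 := by rw [hfu]

/-- The constant `c_{2l-1,r}`. -/
noncomputable def cconst (l r : ℕ) : ℝ :=
  Real.sqrt (∑' s : ℕ,
    (((r : ℝ) / ((r : ℝ) + (s : ℝ))) ^ (2 * l - 1) * (Nat.choose (2 * r + s - 1) s : ℝ)) ^ 2)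

set_option maxHeartbeats 2000000 in
/-- `c_{2l-1,n} = e^{o(n)}` as `n → ∞`, uniformly in `l ≥ n log n / log log n`. -/
theorem cconst_subexponential :
    ∀ ε > (0 : ℝ), ∃ N : ℕ, ∀ n : ℕ, N ≤ n → ∀ l : ℕ,
      (n : ℝ) * Real.log n / Real.log (Real.log n) ≤ (l : ℝ) →
      cconst l n ≤ Real.exp (ε * n) := by
  intro ε hε
  set M : ℝ := max 0 (Real.log (6 / ε)) with hMdef
  have hc2 : ∀ᶠ m : ℕ in Filter.atTop, max 400 (16 * (M + 1) ^ 2) ≤ Real.log m :=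
    (Real.tendsto_log_atTop.comp tendsto_natCast_atTop_atTop).eventually_ge_atTop _
  have hc3 : ∀ᶠ m : ℕ in Filter.atTop, 4 * (m : ℝ) ^ 4 ≤ Real.exp (ε * m) := by
    have h1 : Filter.Tendsto (fun m : ℕ => ε * m) Filter.atTop Filter.atTop :=
      tendsto_natCast_atTop_atTop.const_mul_atTop hε
    have h2 := (Real.tendsto_exp_div_pow_atTop 4).comp h1
    filter_upwards [h2.eventually_ge_atTop (4 / ε ^ 4), Filter.eventually_ge_atTop 1]
      with m h hm1
    have hmpos : (0 : ℝ) < m := by exact_mod_cast hm1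
    have h' : 4 / ε ^ 4 ≤ Real.exp (ε * m) / (ε * m) ^ 4 := h
    rw [le_div_iff₀ (by positivity)] at h'
    calc 4 * (m : ℝ) ^ 4 = 4 / ε ^ 4 * (ε * m) ^ 4 := by field_simp
      _ ≤ Real.exp (ε * m) := h'
  obtain ⟨N, hN⟩ := Filter.eventually_atTop.mp (hc2.and hc3)
  refine ⟨N, fun n hn l hl => ?_⟩
  obtain ⟨hcc, hE4⟩ := hN n hn
  have h400 : (400 : ℝ) ≤ Real.log n := le_trans (le_max_left _ _) hcc
  have hMle : 16 * (M + 1) ^ 2 ≤ Real.log n := le_trans (le_max_right _ _) hcc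
  have hn0 : n ≠ 0 := by
    rintro rfl
    norm_num [Real.log_zero] at h400
  have hn1 : 1 ≤ n := Nat.one_le_iff_ne_zero.2 hn0
  have hr1 : (1 : ℝ) ≤ n := by exact_mod_cast hn1
  have hrpos : (0 : ℝ) < n := by linarith
  have hLpos : (0 : ℝ) < Real.log n := by linarith
  have hr401 : (401 : ℝ) ≤ n := by
    nlinarith [Real.log_le_sub_one_of_pos hrpos]
  have hn3 : 3 ≤ n := by
    have h3 : ((3 : ℕ) : ℝ) ≤ (n : ℝ) := by push_cast; linarith
    exact_mod_cast h3
  set SL : ℝ := Real.sqrt (Real.log n) with hSLdef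
  have hSL2 : SL ^ 2 = Real.log n := Real.sq_sqrt hLpos.le
  have hSLnn : 0 ≤ SL := Real.sqrt_nonneg _
  have hSL20 : 20 ≤ SL := by nlinarith [hSL2, h400, hSLnn]
  have hloglog : Real.log (Real.log n) ≤ 2 * SL := by
    have h1 := Real.log_sqrt hLpos.le
    have h2 := Real.log_le_sub_one_of_pos (Real.sqrt_pos.2 hLpos)
    rw [← hSLdef] at h1 h2
    linarith
  have hloglogpos : 0 < Real.log (Real.log n) := Real.log_pos (by linarith)
  have hlA : (n : ℝ) * SL / 2 ≤ l := by
    refine le_trans ?_ hl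
    rw [div_le_div_iff₀ (by norm_num) hloglogpos]
    have h1 : (n : ℝ) * SL * Real.log (Real.log n) ≤ (n : ℝ) * SL * (2 * SL) :=
      mul_le_mul_of_nonneg_left hloglog (by positivity)
    have h2 : (n : ℝ) * SL * (2 * SL) = 2 * ((n : ℝ) * SL ^ 2) := by ring
    rw [hSL2] at h2
    linarith
  have hl10r : 10 * (n : ℝ) ≤ l := by
    have h1 : (n : ℝ) * 20 ≤ (n : ℝ) * SL := mul_le_mul_of_nonneg_left hSL20 hrpos.le
    linarith
  have hl10 : 10 * n ≤ l := by
    have h1 : ((10 * n : ℕ) : ℝ) ≤ (l : ℝ) := by push_cast; linarith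
    exact_mod_cast h1
  have hl1 : 1 ≤ l := by omega
  have hexp6 : Real.exp (-(SL / 4)) ≤ ε / 6 := by
    have hM0 : 0 ≤ M := le_max_left _ _
    have hsq : Real.sqrt (16 * (M + 1) ^ 2) = 4 * (M + 1) := by
      rw [show 16 * (M + 1) ^ 2 = (4 * (M + 1)) ^ 2 by ring, Real.sqrt_sq (by positivity)]
    have hSLge : 4 * (M + 1) ≤ SL := by
      rw [← hsq, hSLdef]
      exact Real.sqrt_le_sqrt hMle
    have h1 : Real.exp (-(SL / 4)) ≤ Real.exp (-M) := by
      rw [Real.exp_le_exp]; linarith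
    have h2 : Real.exp (-M) ≤ Real.exp (-(Real.log (6 / ε))) := by
      rw [Real.exp_le_exp]
      have : Real.log (6 / ε) ≤ M := le_max_right _ _
      linarith
    have h3 : Real.exp (-(Real.log (6 / ε))) = ε / 6 := by
      rw [Real.exp_neg, Real.exp_log (by positivity)]
      field_simp
    linarith
  -- the summand and the dominating function
  set E : ℝ := Real.exp (ε * n) with hEdef
  have hE1 : 1 ≤ E := Real.one_le_exp (by positivity)
  have key : ∀ s : ℕ,
      (((n : ℝ) / ((n : ℝ) + (s : ℝ))) ^ (2 * l - 1) * (Nat.choose (2 * n + s - 1) s : ℝ)) ^ 2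
        ≤ (if s < n then E else 0) + (n : ℝ) ^ 4 * (1 / (s : ℝ) ^ 2) := by
    intro s
    rcases lt_or_ge s n with hsn | hsn
    · rw [if_pos hsn]
      have hg2nn : 0 ≤ (n : ℝ) ^ 4 * (1 / (s : ℝ) ^ 2) := by positivity
      have hmain : (((n : ℝ) / ((n : ℝ) + (s : ℝ))) ^ (2 * l - 1)
          * (Nat.choose (2 * n + s - 1) s : ℝ)) ^ 2 ≤ E := by
        rcases Nat.eq_zero_or_pos s with rfl | hs1
        · have h0 : ((n : ℝ) / ((n : ℝ) + ((0 : ℕ) : ℝ))) = 1 := by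
            rw [Nat.cast_zero, add_zero, div_self hrpos.ne']
          rw [h0, one_pow, one_mul, Nat.choose_zero_right]
          norm_num
          exact Real.one_le_exp (by positivity)
        · have ht := caseA_bound n s l hn1 hs1 hsn.le hl1
          have h1 : SL / 4 ≤ (l : ℝ) / (2 * (n : ℝ)) := by
            rw [div_le_div_iff₀ (by norm_num) (by positivity)]
            linarith
          have h2 : Real.exp (-((l : ℝ) / (2 * (n : ℝ)))) ≤ Real.exp (-(SL / 4)) := by
            rw [Real.exp_le_exp]; linarith
          have hmono : 3 * (n : ℝ) * Real.exp (-((l : ℝ) / (2 * (n : ℝ)))) ≤ ε * n / 2 := by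
            calc 3 * (n : ℝ) * Real.exp (-((l : ℝ) / (2 * (n : ℝ))))
                ≤ 3 * (n : ℝ) * (ε / 6) :=
                  mul_le_mul_of_nonneg_left (h2.trans hexp6) (by positivity)
              _ = ε * n / 2 := by ring
          have ht2 : ((n : ℝ) / ((n : ℝ) + (s : ℝ))) ^ (2 * l - 1)
              * (Nat.choose (2 * n + s - 1) s : ℝ) ≤ Real.exp (ε * n / 2) :=
            ht.trans (by rw [Real.exp_le_exp]; exact hmono)
          have htnn : 0 ≤ ((n : ℝ) / ((n : ℝ) + (s : ℝ))) ^ (2 * l - 1)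
              * (Nat.choose (2 * n + s - 1) s : ℝ) := by positivity
          calc (((n : ℝ) / ((n : ℝ) + (s : ℝ))) ^ (2 * l - 1)
              * (Nat.choose (2 * n + s - 1) s : ℝ)) ^ 2
              ≤ (Real.exp (ε * n / 2)) ^ 2 := pow_le_pow_left₀ htnn ht2 2
            _ = E := by
                rw [hEdef, ← Real.exp_nat_mul]
                congr 1
                push_cast
                ring
      linarith
    · rw [if_neg (not_lt.2 hsn), zero_add]
      have hs1r : (1 : ℝ) ≤ s := by
        have : (1 : ℕ) ≤ s := le_trans hn1 hsn
        exact_mod_cast this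
      have hspos : (0 : ℝ) < s := by linarith
      have hnsr : (n : ℝ) ≤ s := by exact_mod_cast hsn
      have ht := caseB_bound n s l hn3 hsn hl10
      have htnn : 0 ≤ ((n : ℝ) / ((n : ℝ) + (s : ℝ))) ^ (2 * l - 1)
          * (Nat.choose (2 * n + s - 1) s : ℝ) := by positivity
      calc (((n : ℝ) / ((n : ℝ) + (s : ℝ))) ^ (2 * l - 1)
          * (Nat.choose (2 * n + s - 1) s : ℝ)) ^ 2
          ≤ (((n : ℝ) / ((n : ℝ) + (s : ℝ))) ^ 2) ^ 2 := pow_le_pow_left₀ htnn ht 2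
        _ = ((n : ℝ) / ((n : ℝ) + (s : ℝ))) ^ 4 := by ring
        _ ≤ ((n : ℝ) / (s : ℝ)) ^ 4 := by
            have hdiv : (n : ℝ) / ((n : ℝ) + (s : ℝ)) ≤ (n : ℝ) / (s : ℝ) := by
              rw [div_le_div_iff₀ (by positivity) hspos]
              nlinarith
            exact pow_le_pow_left₀ (by positivity) hdiv 4
        _ = (n : ℝ) ^ 4 / (s : ℝ) ^ 4 := div_pow _ _ _
        _ ≤ (n : ℝ) ^ 4 / (s : ℝ) ^ 2 := by
            rw [div_le_div_iff₀ (by positivity) (by positivity)]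
            have hss : (s : ℝ) ^ 2 ≤ (s : ℝ) ^ 4 := pow_le_pow_right₀ hs1r (by norm_num)
            exact mul_le_mul_of_nonneg_left hss (by positivity)
        _ = (n : ℝ) ^ 4 * (1 / (s : ℝ) ^ 2) := by ring
  -- summability and tsum bounds
  have hg1sum : Summable (fun s : ℕ => if s < n then E else 0) := by
    apply summable_of_ne_finset_zero (s := Finset.range n)
    intro b hb
    rw [if_neg (by simpa using hb)]
  have hg2sum : Summable (fun s : ℕ => (n : ℝ) ^ 4 * (1 / (s : ℝ) ^ 2)) :=
    hasSum_zeta_two.summable.mul_left _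
  have hg1tsum : ∑' s : ℕ, (if s < n then E else 0) = n * E := by
    rw [tsum_eq_sum (s := Finset.range n) (fun b hb => if_neg (by simpa using hb))]
    rw [Finset.sum_congr rfl (fun b hb => if_pos (Finset.mem_range.1 hb))]
    rw [Finset.sum_const, Finset.card_range, nsmul_eq_mul]
  have hg2tsum : ∑' s : ℕ, (n : ℝ) ^ 4 * (1 / (s : ℝ) ^ 2) ≤ 2 * (n : ℝ) ^ 4 := by
    rw [tsum_mul_left, hasSum_zeta_two.tsum_eq]
    have hn4 : (0 : ℝ) ≤ (n : ℝ) ^ 4 := by positivity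
    have hpi2 : Real.pi ^ 2 ≤ 12 := by nlinarith [Real.pi_lt_d2, Real.pi_pos]
    nlinarith [hpi2, hn4]
  have hgsum : Summable (fun s : ℕ => (if s < n then E else 0) + (n : ℝ) ^ 4 * (1 / (s : ℝ) ^ 2)) :=
    hg1sum.add hg2sum
  have hfsum : Summable (fun s : ℕ =>
      (((n : ℝ) / ((n : ℝ) + (s : ℝ))) ^ (2 * l - 1) * (Nat.choose (2 * n + s - 1) s : ℝ)) ^ 2) :=
    Summable.of_nonneg_of_le (fun s => sq_nonneg _) key hgsum
  have h1 : ∑' s : ℕ,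
      (((n : ℝ) / ((n : ℝ) + (s : ℝ))) ^ (2 * l - 1) * (Nat.choose (2 * n + s - 1) s : ℝ)) ^ 2
      ≤ ∑' s : ℕ, ((if s < n then E else 0) + (n : ℝ) ^ 4 * (1 / (s : ℝ) ^ 2)) :=
    Summable.tsum_le_tsum key hfsum hgsum
  rw [Summable.tsum_add hg1sum hg2sum, hg1tsum] at h1
  have hfinal : ∑' s : ℕ,
      (((n : ℝ) / ((n : ℝ) + (s : ℝ))) ^ (2 * l - 1) * (Nat.choose (2 * n + s - 1) s : ℝ)) ^ 2
      ≤ E ^ 2 := by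
    have hn4 : (n : ℝ) ≤ (n : ℝ) ^ 4 := by
      have h := pow_le_pow_right₀ hr1 (show 1 ≤ 4 by norm_num)
      simpa using h
    have hEpos : (0 : ℝ) < E := Real.exp_pos _
    have p1 : (n : ℝ) * E ≤ (n : ℝ) ^ 4 * E := mul_le_mul_of_nonneg_right hn4 hEpos.le
    have p2 : (n : ℝ) ^ 4 * E ≤ E / 4 * E := by
      apply mul_le_mul_of_nonneg_right _ hEpos.le
      rw [hEdef] at hE4 ⊢
      linarith
    have p3 : 2 * (n : ℝ) ^ 4 ≤ E / 2 := by
      rw [hEdef] at hE4 ⊢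
      linarith
    have p4 : E ≤ E ^ 2 := by nlinarith [hE1]
    nlinarith [h1, hg2tsum]
  unfold cconst
  exact le_trans (Real.sqrt_le_sqrt hfinal)
    (le_of_eq (Real.sqrt_sq (Real.exp_pos _).le))
end

section
/- Let $y_0,\dots,y_n\in I$ be pairwise distinct and let $0\le i\le n$. Then $g$ is partially differentiable with respect to $y_i$ at $(y_0,\dots,y_n)$ and there exists $\eta\in I$ such that $\frac{\partial g}{\partial y_i}(y_0,\dots,y_n)=\frac{f^{(n+2-1)}(\eta)}{(n+1)!}$, i.e. the partial derivative equals $f^{(n+1)}(\eta)/(n+1)!$. -/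
open Real Set Finset

/-- The divided difference `g(y_0,…,y_n) = ∑_k f(y_k) / ∏_{j ≠ k} (y_k - y_j)`. -/
noncomputable def divdiff {n : ℕ} (f : ℝ → ℝ) (y : Fin (n + 1) → ℝ) : ℝ :=
  ∑ k, f (y k) / ∏ j ∈ Finset.univ.erase k, (y k - y j)

open Polynomial

lemma genRolle : ∀ (m : ℕ) (φ : ℝ → ℝ) (a b : ℝ) (x : Fin (m + 2) → ℝ),
    StrictMono x → (∀ j, x j ∈ Set.Ioo a b) →
    (∀ k < m + 1, DifferentiableOn ℝ (iteratedDeriv k φ) (Set.Ioo a b)) →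
    (∀ j, φ (x j) = 0) →
    ∃ η ∈ Set.Ioo (x 0) (x (Fin.last (m + 1))), iteratedDeriv (m + 1) φ η = 0 := by
  intro m
  induction m with
  | zero =>
    intro φ a b x hx hxab hdf hz
    have h01 : x 0 < x 1 := hx (by norm_num : (0 : Fin 2) < 1)
    have hsub : Set.Icc (x 0) (x 1) ⊆ Set.Ioo a b :=
      Set.Icc_subset_Ioo (hxab 0).1 (hxab 1).2
    have hca : ContinuousOn φ (Set.Icc (x 0) (x 1)) := by
      have := hdf 0 (by norm_num)
      simpa [iteratedDeriv_zero] using (this.continuousOn.mono hsub)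
    obtain ⟨c, hc, hc0⟩ := exists_deriv_eq_zero h01 hca ((hz 0).trans (hz 1).symm)
    exact ⟨c, by simpa [Fin.last] using hc, by simpa [iteratedDeriv_one] using hc0⟩
  | succ m ih =>
    intro φ a b x hx hxab hdf hz
    -- find zeros of deriv φ between consecutive points
    have key : ∀ j : Fin (m + 2), ∃ c ∈ Set.Ioo (x j.castSucc) (x j.succ), deriv φ c = 0 := by
      intro j
      have hlt : x j.castSucc < x j.succ := hx (Fin.castSucc_lt_succ : j.castSucc < j.succ)
      have hsub : Set.Icc (x j.castSucc) (x j.succ) ⊆ Set.Ioo a b :=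
        Set.Icc_subset_Ioo (hxab _).1 (hxab _).2
      have hca : ContinuousOn φ (Set.Icc (x j.castSucc) (x j.succ)) := by
        have := hdf 0 (by norm_num)
        simpa [iteratedDeriv_zero] using (this.continuousOn.mono hsub)
      exact exists_deriv_eq_zero hlt hca ((hz _).trans (hz _).symm)
    choose c hc hc0 using key
    have hcmono : StrictMono c := by
      rw [Fin.strictMono_iff_lt_succ]
      intro j
      calc c j.castSucc < x j.castSucc.succ := (hc j.castSucc).2
        _ ≤ x j.succ.castSucc := by
            rw [Fin.succ_castSucc]
        _ < c j.succ := (hc j.succ).1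
    have hcab : ∀ j, c j ∈ Set.Ioo a b := fun j =>
      ⟨lt_trans (hxab _).1 (hc j).1, lt_trans (hc j).2 (hxab _).2⟩
    have hdf' : ∀ k < m + 1, DifferentiableOn ℝ (iteratedDeriv k (deriv φ)) (Set.Ioo a b) := by
      intro k hk
      have := hdf (k + 1) (by omega)
      rwa [iteratedDeriv_succ'] at this
    obtain ⟨η, hη, hη0⟩ := ih (deriv φ) a b c hcmono hcab hdf'
      (fun j => hc0 j)
    have h1 : x 0 < c 0 := by simpa using (hc 0).1
    have h2 : c (Fin.last (m + 1)) < x (Fin.last (m + 2)) := by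
      simpa [Fin.succ_last] using (hc (Fin.last (m + 1))).2
    exact ⟨η, ⟨lt_trans h1 hη.1, lt_trans hη.2 h2⟩, by rwa [iteratedDeriv_succ']⟩

lemma iteratedDeriv_polyeval (p : ℝ[X]) (k : ℕ) :
    iteratedDeriv k (fun x => p.eval x) = fun x => (derivative^[k] p).eval x := by
  induction k generalizing p with
  | zero => simp
  | succ k ih =>
    rw [iteratedDeriv_succ']
    have : deriv (fun x => p.eval x) = fun x => p.derivative.eval x :=
      funext fun x => Polynomial.deriv p
    rw [this, ih, Function.iterate_succ_apply]

lemma iteratedDeriv_sub_poly (s : Set ℝ) (hs : IsOpen s) (f : ℝ → ℝ) (p : ℝ[X]) (k : ℕ)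
    (hf : ∀ l < k, DifferentiableOn ℝ (iteratedDeriv l f) s) :
    Set.EqOn (iteratedDeriv k (fun x => f x - p.eval x))
      (fun x => iteratedDeriv k f x - (derivative^[k] p).eval x) s := by
  induction k with
  | zero => intro x hx; simp
  | succ k ih =>
    intro x hx
    have hIH := ih (fun l hl => hf l (by omega))
    have hev : iteratedDeriv k (fun x => f x - p.eval x) =ᶠ[nhds x]
        (fun x => iteratedDeriv k f x - (derivative^[k] p).eval x) :=
      Filter.eventuallyEq_of_mem (hs.mem_nhds hx) hIH
    rw [iteratedDeriv_succ, hev.deriv_eq]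
    have h1 : DifferentiableAt ℝ (iteratedDeriv k f) x :=
      (hf k (by omega)).differentiableAt (hs.mem_nhds hx)
    have h2 : DifferentiableAt ℝ (fun x => (derivative^[k] p).eval x) x :=
      (Polynomial.differentiable _).differentiableAt
    rw [deriv_fun_sub h1 h2]
    simp only [iteratedDeriv_succ]
    congr 1
    rw [Polynomial.deriv (derivative^[k] p), Function.iterate_succ_apply']

lemma iteratedDerivWithin_isOpen' {s : Set ℝ} {f : ℝ → ℝ} {x : ℝ} (k : ℕ)
    (hs : IsOpen s) (hx : x ∈ s) :
    iteratedDerivWithin k f s x = iteratedDeriv k f x := by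
  rw [iteratedDerivWithin_eq_iteratedFDerivWithin, iteratedDeriv_eq_iteratedFDeriv,
    iteratedFDerivWithin_of_isOpen k hs hx]

lemma interp_coeff {m : ℕ} (z : Fin (m + 2) → ℝ) (f : ℝ → ℝ) :
    (Lagrange.interpolate Finset.univ z (f ∘ z)).coeff (m + 1) = divdiff f z := by
  rw [Lagrange.interpolate_apply, finset_sum_coeff]
  refine Finset.sum_congr rfl fun i _ => ?_
  rw [coeff_C_mul]
  have h : Lagrange.basis Finset.univ z i =
      C (∏ j ∈ Finset.univ.erase i, (z i - z j)⁻¹) *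
        ∏ j ∈ Finset.univ.erase i, (X - C (z j)) := by
    rw [Lagrange.basis]
    simp_rw [Lagrange.basisDivisor]
    rw [Finset.prod_mul_distrib, map_prod]
  rw [h, coeff_C_mul]
  have hm : (∏ j ∈ Finset.univ.erase i, (X - C (z j))).Monic :=
    monic_prod_of_monic _ _ (fun j _ => monic_X_sub_C _)
  have hd : (∏ j ∈ Finset.univ.erase i, (X - C (z j))).natDegree = m + 1 := by
    rw [natDegree_prod_of_monic _ _ (fun j _ => monic_X_sub_C _)]
    simp [Finset.card_erase_of_mem]
  have hc1 : (∏ j ∈ Finset.univ.erase i, (X - C (z j))).coeff (m + 1) = 1 := by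
    conv_lhs => rw [← hd]
    exact hm.coeff_natDegree
  rw [hc1, mul_one, Function.comp_apply, div_eq_mul_inv, ← Finset.prod_inv_distrib]

lemma mvt_divdiff (m : ℕ) (f : ℝ → ℝ) (a b : ℝ)
    (hdf : ∀ k < m + 2, DifferentiableOn ℝ (iteratedDeriv k f) (Set.Ioo a b))
    (z : Fin (m + 2) → ℝ) (hz : ∀ j, z j ∈ Set.Ioo a b) (hinj : Function.Injective z) :
    ∃ η ∈ Set.Ioo a b,
      divdiff f z = iteratedDeriv (m + 1) f η / (Nat.factorial (m + 1)) := by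
  classical
  set p := Lagrange.interpolate Finset.univ z (f ∘ z) with hp
  have hinj' : Set.InjOn z (Finset.univ : Finset (Fin (m + 2))) := hinj.injOn
  set σ := Tuple.sort z with hσ
  set x : Fin (m + 2) → ℝ := z ∘ σ with hx
  have hmono : StrictMono x :=
    (Tuple.monotone_sort z).strictMono_of_injective (hinj.comp σ.injective)
  set φ := fun t => f t - p.eval t with hφ
  have hzero : ∀ j, φ (x j) = 0 := by
    intro j
    have h1 := Lagrange.eval_interpolate_at_node (f ∘ z) hinj' (Finset.mem_univ (σ j))
    simp only [hφ, hx, Function.comp_apply, ← hp] at *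
    rw [h1]; ring
  have hφdiff : ∀ k < m + 1, DifferentiableOn ℝ (iteratedDeriv k φ) (Set.Ioo a b) := by
    intro k hk
    have heq := iteratedDeriv_sub_poly _ isOpen_Ioo f p k (fun l hl => hdf l (by omega))
    exact DifferentiableOn.congr
      ((hdf k (by omega)).sub (Polynomial.differentiable _).differentiableOn) heq
  obtain ⟨η, hη, hη0⟩ := genRolle m φ a b x hmono (fun j => hz (σ j)) hφdiff hzero
  have hηab : η ∈ Set.Ioo a b := ⟨lt_trans (hz _).1 hη.1, lt_trans hη.2 (hz _).2⟩
  refine ⟨η, hηab, ?_⟩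
  have heq := iteratedDeriv_sub_poly _ isOpen_Ioo f p (m + 1)
    (fun l hl => hdf l (by omega)) hηab
  rw [hη0] at heq
  have hfeval : iteratedDeriv (m + 1) f η = (derivative^[m + 1] p).eval η := by
    have := heq.symm
    simpa [sub_eq_zero] using this
  have hdeg : p.natDegree ≤ m + 1 := by
    have hlt := Lagrange.degree_interpolate_lt (f ∘ z) hinj'
    rw [Finset.card_univ, Fintype.card_fin] at hlt
    by_cases hp0 : p = 0
    · simp [hp0]
    · have := (Polynomial.natDegree_lt_iff_degree_lt hp0).mpr (by exact_mod_cast hlt)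
      omega
  have hconst : (derivative^[m + 1] p).natDegree = 0 :=
    Nat.le_zero.mp ((natDegree_iterate_derivative p (m + 1)).trans (by omega))
  have hevc : (derivative^[m + 1] p).eval η = (derivative^[m + 1] p).coeff 0 := by
    conv_lhs => rw [Polynomial.eq_C_of_natDegree_le_zero (le_of_eq hconst)]
    simp
  have hcoe : (derivative^[m + 1] p).coeff 0
      = (Nat.factorial (m + 1) : ℝ) * p.coeff (m + 1) := by
    rw [coeff_iterate_derivative]
    simp only [Nat.zero_add, Nat.descFactorial_self, nsmul_eq_mul]
  have hdd : p.coeff (m + 1) = divdiff f z := interp_coeff z f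
  have hfac : (Nat.factorial (m + 1) : ℝ) ≠ 0 := by
    exact_mod_cast Nat.factorial_ne_zero (m + 1)
  rw [hfeval, hevc, hcoe, hdd]
  field_simp


lemma diff_prod {ι : Type*} (s : Finset ι) (g : ι → ℝ → ℝ) (x : ℝ)
    (h : ∀ j ∈ s, DifferentiableAt ℝ (g j) x) :
    DifferentiableAt ℝ (fun t => ∏ j ∈ s, g j t) x := by
  classical
  induction s using Finset.induction with
  | empty => simpa using differentiableAt_const (1 : ℝ)
  | @insert a s hns ih =>
    simp only [Finset.prod_insert hns]
    exact (h a (Finset.mem_insert_self a s)).mul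
      (ih fun j hj => h j (Finset.mem_insert_of_mem hj))

lemma upd_diff {n : ℕ} (y : Fin (n + 1) → ℝ) (i k : Fin (n + 1)) :
    Differentiable ℝ (fun t => Function.update y i t k) := by
  rcases eq_or_ne k i with rfl | hk
  · simpa [Function.update_self] using differentiable_id
  · simpa [Function.update_of_ne hk] using differentiable_const (y k)

lemma G_diff (n : ℕ) (f : ℝ → ℝ) (hf : ContDiffOn ℝ (n + 2) f (Set.Ioo (-1 : ℝ) 1))
    (y : Fin (n + 1) → ℝ) (hy : ∀ i, y i ∈ Set.Ioo (-1 : ℝ) 1)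
    (hinj : Function.Injective y) (i : Fin (n + 1)) :
    DifferentiableAt ℝ (fun t => divdiff f (Function.update y i t)) (y i) := by
  have hfd : DifferentiableAt ℝ f (y i) := by
    have h1 : DifferentiableOn ℝ f (Set.Ioo (-1 : ℝ) 1) :=
      hf.differentiableOn (by exact_mod_cast not_false)
    exact h1.differentiableAt (isOpen_Ioo.mem_nhds (hy i))
  unfold divdiff
  apply DifferentiableAt.fun_sum
  intro k _
  apply DifferentiableAt.div
  · -- numerator
    rcases eq_or_ne k i with rfl | hk
    · simpa [Function.update_self] using hfd
    · simpa [Function.update_of_ne hk] using differentiableAt_const (f (y k))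
  · exact diff_prod _ _ _ fun j _ => ((upd_diff y i k).sub (upd_diff y i j)).differentiableAt
  · -- denominator nonzero at y i
    have : Function.update y i (y i) = y := Function.update_eq_self i y
    rw [this]
    refine Finset.prod_ne_zero_iff.mpr fun j hj => sub_ne_zero.mpr fun h => ?_
    exact (Finset.mem_erase.mp hj).1 (hinj h.symm)


lemma univ_erase_last (n : ℕ) :
    (Finset.univ : Finset (Fin (n + 2))).erase (Fin.last (n + 1))
      = Finset.map Fin.castSuccEmb Finset.univ := by
  rw [Fin.univ_castSuccEmb]
  exact Finset.erase_cons _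

lemma snoc_prod {n : ℕ} (y : Fin (n + 1) → ℝ) (t : ℝ) (k : Fin (n + 1)) :
    ∏ j ∈ Finset.univ.erase (Fin.castSucc k),
        ((Fin.snoc y t : Fin (n + 2) → ℝ) (Fin.castSucc k) - (Fin.snoc y t : Fin (n + 2) → ℝ) j)
      = (y k - t) * ∏ j ∈ Finset.univ.erase k, (y k - y j) := by
  have hmem : Fin.last (n + 1) ∈ Finset.univ.erase (Fin.castSucc k) :=
    Finset.mem_erase.mpr ⟨(Fin.castSucc_lt_last k).ne', Finset.mem_univ _⟩
  have hme : (Finset.map Fin.castSuccEmb (Finset.univ : Finset (Fin (n + 1)))).erase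
      (Fin.castSucc k) = Finset.map Fin.castSuccEmb (Finset.univ.erase k) :=
    (Finset.map_erase Fin.castSuccEmb Finset.univ k).symm
  rw [← Finset.mul_prod_erase _ _ hmem, Finset.erase_right_comm, univ_erase_last, hme,
    Finset.prod_map]
  rw [Fin.snoc_castSucc, Fin.snoc_last]
  refine congrArg _ (Finset.prod_congr rfl fun j _ => ?_)
  rw [show (Fin.castSuccEmb j : Fin (n + 2)) = Fin.castSucc j from rfl, Fin.snoc_castSucc]

lemma snoc_dd {n : ℕ} (f : ℝ → ℝ) (y : Fin (n + 1) → ℝ) (t : ℝ) :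
    divdiff f (Fin.snoc y t)
      = (∑ k, f (y k) / ((y k - t) * ∏ j ∈ Finset.univ.erase k, (y k - y j)))
        + f t / ∏ j, (t - y j) := by
  rw [divdiff, Fin.sum_univ_castSucc]
  congr 1
  · exact Finset.sum_congr rfl fun k _ => by rw [snoc_prod, Fin.snoc_castSucc]
  · rw [Fin.snoc_last, univ_erase_last, Finset.prod_map]
    refine congrArg (f t / ·) (Finset.prod_congr rfl fun j _ => ?_)
    rw [show (Fin.castSuccEmb j : Fin (n + 2)) = Fin.castSucc j from rfl, Fin.snoc_castSucc]

lemma dd_rec {n : ℕ} (f : ℝ → ℝ) (y : Fin (n + 1) → ℝ) (hinj : Function.Injective y)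
    (i : Fin (n + 1)) (t : ℝ) (ht : ∀ j, t ≠ y j) :
    divdiff f (Function.update y i t) - divdiff f y
      = (t - y i) * divdiff f (Fin.snoc y t) := by
  classical
  have hne : ∀ {k j : Fin (n + 1)}, k ≠ j → y k - y j ≠ 0 := fun h =>
    sub_ne_zero.mpr fun hh => h (hinj hh)
  have htne : ∀ j, y j - t ≠ 0 := fun j => sub_ne_zero.mpr fun hh => ht j hh.symm
  have htne' : ∀ j, t - y j ≠ 0 := fun j => sub_ne_zero.mpr (ht j)
  have hQ : ∀ k : Fin (n + 1), ∏ j ∈ Finset.univ.erase k, (y k - y j) ≠ 0 := fun k =>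
    Finset.prod_ne_zero_iff.mpr fun j hj => hne (Ne.symm (Finset.mem_erase.mp hj).1)
  have hS : ∀ k : Fin (n + 1),
      ∏ j ∈ (Finset.univ.erase k).erase i, (y k - y j) ≠ 0 := fun k =>
    Finset.prod_ne_zero_iff.mpr fun j hj =>
      hne (Ne.symm (Finset.mem_erase.mp (Finset.mem_erase.mp hj).2).1)
  rw [snoc_dd, divdiff, divdiff, ← Finset.sum_sub_distrib, mul_add, Finset.mul_sum,
    ← Finset.add_sum_erase _ _ (Finset.mem_univ i),
    ← Finset.add_sum_erase _ (fun k => (t - y i) * (f (y k) / ((y k - t) * _)))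
      (Finset.mem_univ i)]
  have hQi : ∏ j, (t - y j) = (t - y i) * ∏ j ∈ Finset.univ.erase i, (t - y j) :=
    (Finset.mul_prod_erase _ _ (Finset.mem_univ i)).symm
  have hterm : ∀ k ∈ Finset.univ.erase i,
      f (Function.update y i t k) /
          ∏ j ∈ Finset.univ.erase k, (Function.update y i t k - Function.update y i t j)
        - f (y k) / ∏ j ∈ Finset.univ.erase k, (y k - y j)
      = (t - y i) * (f (y k) / ((y k - t) * ∏ j ∈ Finset.univ.erase k, (y k - y j))) := by
    intro k hk
    have hki : k ≠ i := (Finset.mem_erase.mp hk).1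
    have himem : i ∈ Finset.univ.erase k := Finset.mem_erase.mpr ⟨Ne.symm hki, Finset.mem_univ _⟩
    have hprod1 : ∏ j ∈ Finset.univ.erase k, (Function.update y i t k - Function.update y i t j)
        = (y k - t) * ∏ j ∈ (Finset.univ.erase k).erase i, (y k - y j) := by
      rw [← Finset.mul_prod_erase _ _ himem, Function.update_self, Function.update_of_ne hki]
      exact congrArg _ (Finset.prod_congr rfl fun j hj => by
        rw [Function.update_of_ne (Finset.mem_erase.mp hj).1])
    have hprod2 : ∏ j ∈ Finset.univ.erase k, (y k - y j)
        = (y k - y i) * ∏ j ∈ (Finset.univ.erase k).erase i, (y k - y j) :=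
      (Finset.mul_prod_erase _ _ himem).symm
    rw [hprod1, hprod2, Function.update_of_ne hki]
    have h1 := htne k
    have h2 := hne hki
    have h3 := hS k
    field_simp
    ring
  rw [Finset.sum_congr rfl hterm]
  have hi : f (Function.update y i t i) /
        ∏ j ∈ Finset.univ.erase i, (Function.update y i t i - Function.update y i t j)
      - f (y i) / ∏ j ∈ Finset.univ.erase i, (y i - y j)
      = (t - y i) * (f (y i) / ((y i - t) * ∏ j ∈ Finset.univ.erase i, (y i - y j)))
        + (t - y i) * (f t / ∏ j, (t - y j)) := by
    have hprod : ∏ j ∈ Finset.univ.erase i, (Function.update y i t i - Function.update y i t j)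
        = ∏ j ∈ Finset.univ.erase i, (t - y j) :=
      Finset.prod_congr rfl fun j hj => by
        rw [Function.update_self, Function.update_of_ne (Finset.mem_erase.mp hj).1]
    rw [hprod, Function.update_self, hQi]
    have h1 := htne i
    have h2 := hQ i
    have h3 : ∏ j ∈ Finset.univ.erase i, (t - y j) ≠ 0 :=
      Finset.prod_ne_zero_iff.mpr fun j _ => htne' j
    have h4 := htne' i
    field_simp
    ring
  rw [hi]
  ring


lemma snoc_inj {n : ℕ} {y : Fin (n + 1) → ℝ} {t : ℝ} (hinj : Function.Injective y)
    (ht : ∀ j, t ≠ y j) : Function.Injective (Fin.snoc y t : Fin (n + 2) → ℝ) := by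
  intro a b hab
  induction a using Fin.lastCases with
  | last =>
    induction b using Fin.lastCases with
    | last => rfl
    | cast jb =>
      rw [Fin.snoc_last, Fin.snoc_castSucc] at hab
      exact absurd hab (ht jb)
  | cast ja =>
    induction b using Fin.lastCases with
    | last =>
      rw [Fin.snoc_last, Fin.snoc_castSucc] at hab
      exact absurd hab.symm (ht ja)
    | cast jb =>
      rw [Fin.snoc_castSucc, Fin.snoc_castSucc] at hab
      exact congrArg Fin.castSucc (hinj hab)

/-- The partial derivative of the divided difference with respect to `y_i` equals
`f^{(n+1)}(η)/(n+1)!` for some `η ∈ I = (-1,1)`. -/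
theorem divdiff_partial_deriv
    (n : ℕ) (f : ℝ → ℝ) (hf : ContDiffOn ℝ (n + 2) f (Set.Ioo (-1 : ℝ) 1))
    (y : Fin (n + 1) → ℝ) (hy : ∀ i, y i ∈ Set.Ioo (-1 : ℝ) 1)
    (hinj : Function.Injective y) (i : Fin (n + 1)) :
    ∃ D : ℝ, HasDerivAt (fun t => divdiff f (Function.update y i t)) D (y i) ∧
      ∃ η ∈ Set.Ioo (-1 : ℝ) 1,
        D = iteratedDerivWithin (n + 1) f (Set.Ioo (-1 : ℝ) 1) η / (Nat.factorial (n + 1)) := by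
  classical
  set G := fun t => divdiff f (Function.update y i t) with hG
  have hGd : DifferentiableAt ℝ G (y i) := G_diff n f hf y hy hinj i
  set D := deriv G (y i) with hD
  refine ⟨D, hGd.hasDerivAt, ?_⟩
  -- choose bounds a < all points < b inside (-1,1)
  obtain ⟨j0, -, hj0⟩ := Finset.exists_mem_eq_inf' (Finset.univ_nonempty) y
  obtain ⟨j1, -, hj1⟩ := Finset.exists_mem_eq_sup' (Finset.univ_nonempty) y
  set m0 := Finset.univ.inf' Finset.univ_nonempty y with hm0
  set m1 := Finset.univ.sup' Finset.univ_nonempty y with hm1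
  have hm0y : ∀ j, m0 ≤ y j := fun j => Finset.inf'_le _ (Finset.mem_univ j)
  have hm1y : ∀ j, y j ≤ m1 := fun j => Finset.le_sup' _ (Finset.mem_univ j)
  have hm0gt : (-1 : ℝ) < m0 := by rw [hj0]; exact (hy j0).1
  have hm1lt : m1 < 1 := by rw [hj1]; exact (hy j1).2
  set a := (-1 + m0) / 2 with ha
  set b := (m1 + 1) / 2 with hb
  have ha1 : (-1 : ℝ) < a := by rw [ha]; linarith
  have hb1 : b < 1 := by rw [hb]; linarith
  have hyab : ∀ j, y j ∈ Set.Ioo a b := fun j =>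
    ⟨by have := hm0y j; rw [ha]; linarith, by have := hm1y j; rw [hb]; linarith⟩
  have hsub : Set.Ioo a b ⊆ Set.Ioo (-1 : ℝ) 1 :=
    Set.Ioo_subset_Ioo (le_of_lt ha1) (le_of_lt hb1)
  have hsub' : Set.Icc a b ⊆ Set.Ioo (-1 : ℝ) 1 := fun x hx =>
    ⟨lt_of_lt_of_le ha1 hx.1, lt_of_le_of_lt hx.2 hb1⟩
  -- differentiability of iterated derivatives
  have hdfk : ∀ k < n + 2, DifferentiableOn ℝ (iteratedDeriv k f) (Set.Ioo (-1 : ℝ) 1) := by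
    intro k hk
    have h1 : DifferentiableOn ℝ (iteratedDerivWithin k f (Set.Ioo (-1 : ℝ) 1))
        (Set.Ioo (-1 : ℝ) 1) :=
      hf.differentiableOn_iteratedDerivWithin (by exact_mod_cast hk) isOpen_Ioo.uniqueDiffOn
    exact h1.congr fun x hx => (iteratedDerivWithin_isOpen' k isOpen_Ioo hx).symm
  have hdf : ∀ k < n + 2, DifferentiableOn ℝ (iteratedDeriv k f) (Set.Ioo a b) :=
    fun k hk => (hdfk k hk).mono hsub
  -- the compact image set
  set h : ℝ → ℝ := fun x => iteratedDeriv (n + 1) f x / (Nat.factorial (n + 1)) with hh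
  set S := h '' (Set.Icc a b) with hS
  have hScomp : IsCompact S := isCompact_Icc.image_of_continuousOn <| by
    have hc : ContinuousOn (iteratedDeriv (n + 1) f) (Set.Icc a b) :=
      ((hdfk (n + 1) (by omega)).continuousOn).mono hsub'
    exact hc.div_const _
  have hSclosed : IsClosed S := hScomp.isClosed
  -- eventual membership of the slope in S
  have hIoo : ∀ᶠ t in nhds (y i), t ∈ Set.Ioo a b := isOpen_Ioo.eventually_mem (hyab i)
  have hall : ∀ᶠ t in nhds (y i), ∀ j, j ≠ i → t ≠ y j := by
    rw [Filter.eventually_all]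
    intro j
    rcases eq_or_ne j i with rfl | hj
    · filter_upwards with t hcon; exact absurd rfl hcon
    · have hne : y i ≠ y j := fun hc => hj (hinj hc).symm
      filter_upwards [eventually_ne_nhds hne] with t hti _; exact hti
  have hev : ∀ᶠ t in nhdsWithin (y i) {y i}ᶜ, slope G (y i) t ∈ S := by
    have h1 : ∀ᶠ t in nhdsWithin (y i) {y i}ᶜ,
        (t ∈ Set.Ioo a b ∧ ∀ j, j ≠ i → t ≠ y j) ∧ t ≠ y i := by
      filter_upwards [eventually_nhdsWithin_of_eventually_nhds (hIoo.and hall),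
        self_mem_nhdsWithin] with t h1 h2
      exact ⟨h1, h2⟩
    filter_upwards [h1] with t hyp
    obtain ⟨⟨htab, htj⟩, hti⟩ := hyp
    have ht : ∀ j, t ≠ y j := by
      intro j
      rcases eq_or_ne j i with rfl | hj
      · exact hti
      · exact htj j hj
    have hGt : G t - G (y i) = (t - y i) * divdiff f (Fin.snoc y t) := by
      have hdq := dd_rec f y hinj i t ht
      simpa [hG, Function.update_eq_self] using hdq
    have hti' : t - y i ≠ 0 := sub_ne_zero.mpr hti
    have hslope : slope G (y i) t = divdiff f (Fin.snoc y t) := by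
      rw [slope_def_field, hGt, mul_comm, mul_div_assoc, div_self hti', mul_one]
    have hz : ∀ j : Fin (n + 2), (Fin.snoc y t : Fin (n + 2) → ℝ) j ∈ Set.Ioo a b := by
      intro j
      induction j using Fin.lastCases with
      | last => rw [Fin.snoc_last]; exact htab
      | cast jb => rw [Fin.snoc_castSucc]; exact hyab jb
    obtain ⟨η, hη, hdd⟩ := mvt_divdiff n f a b hdf (Fin.snoc y t) hz (snoc_inj hinj ht)
    rw [hslope, hdd]
    exact ⟨η, Set.mem_Icc_of_Ioo hη, rfl⟩
  have hlim : Filter.Tendsto (slope G (y i)) (nhdsWithin (y i) {y i}ᶜ) (nhds D) :=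
    hasDerivAt_iff_tendsto_slope.mp hGd.hasDerivAt
  have hDS : D ∈ S := hSclosed.mem_of_tendsto hlim hev
  obtain ⟨η, hη, hηD⟩ := hDS
  refine ⟨η, hsub' hη, ?_⟩
  rw [← hηD, hh, iteratedDerivWithin_isOpen' (n + 1) isOpen_Ioo (hsub' hη)]
end
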